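/- arXiv:2411.10620 — 5 statements merged into one kernel-verified Lean document; each statement's English description precedes it below -/
import Mathlib

section
/- Suppose the working outcome model is correct, i.e., m1 = μ1⋆ and m0 = μ0⋆ a.s., while the working missingness model e' is arbitrary (G-measurable with c ≤ e' ≤ 1). Then for every β ∈ ℝ^d, the augmented estimating function Ũ(β) := I·W·(A − p̃)·[(R/e')·(Y − A·m1 − (1−A)·m0) + (A + p − 1)·(m1 − m0 − φᵀβ)]·φ satisfies E[Ũ(β) | H] = I·p̃·(1−p̃)·(μ1⋆ − μ0⋆ − φᵀβ)·φ a.s.; in particular, the misspecified missingness model drops out of the conditional expectation. -/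
open MeasureTheory

/-- Integrability of a `Fin d → ℝ`-valued function from integrability of components. -/
lemma pi_integrable_of_comp {Ω : Type*} {F : MeasurableSpace Ω} {P : Measure Ω} {d : ℕ}
    {f : Ω → Fin d → ℝ} (hmeas : AEStronglyMeasurable f P)
    (h : ∀ j, Integrable (fun ω => f ω j) P) : Integrable f P := by
  refine Integrable.mono' (integrable_finset_sum Finset.univ fun j _ => (h j).norm) hmeas ?_
  refine Filter.Eventually.of_forall fun ω => ?_
  refine (pi_norm_le_iff_of_nonneg (Finset.sum_nonneg fun j _ => norm_nonneg _)).mpr fun j => ?_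
  exact Finset.single_le_sum (f := fun j => ‖f ω j‖) (fun i _ => norm_nonneg _) (Finset.mem_univ j)

lemma pi_aesm_of_comp {Ω : Type*} {F : MeasurableSpace Ω} {P : Measure Ω} {d : ℕ}
    {f : Ω → Fin d → ℝ} (h : ∀ j, AEStronglyMeasurable (fun ω => f ω j) P) :
    AEStronglyMeasurable f P := by
  refine ⟨fun ω j => (h j).mk _ ω, ?_, ?_⟩
  · exact (measurable_pi_iff.mpr fun j => (h j).stronglyMeasurable_mk.measurable).stronglyMeasurable
  · have : ∀ᵐ ω ∂P, ∀ j, f ω j = (h j).mk _ ω := ae_all_iff.mpr fun j => (h j).ae_eq_mk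
    filter_upwards [this] with ω hω
    funext j
    exact hω j

/-- Conditional expectation of a `Fin d → ℝ`-valued function is computed componentwise. -/
lemma condexp_pi_aux {Ω : Type*} {H : MeasurableSpace Ω} {F : MeasurableSpace Ω}
    {P : Measure Ω} [IsFiniteMeasure P] (hH : H ≤ F) {d : ℕ} {f : Ω → Fin d → ℝ}
    (hf : Integrable f P) :
    P[f|H] =ᵐ[P] fun ω j => (P[fun ω' => f ω' j|H]) ω := by
  have hcomp : ∀ j : Fin d, Integrable (fun ω => f ω j) P := fun j =>
    (ContinuousLinearMap.proj (R := ℝ) (φ := fun _ : Fin d => ℝ) j).integrable_comp hf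
  have hgmeas : StronglyMeasurable[H] (fun ω j => (P[fun ω' => f ω' j|H]) ω) := by
    have hm : Measurable[H] (fun ω j => (P[fun ω' => f ω' j|H]) ω) := by
      letI : MeasurableSpace Ω := H
      refine measurable_pi_iff.mpr fun j => ?_
      exact (stronglyMeasurable_condExp (m := H) (f := fun ω' => f ω' j)).measurable
    exact hm.stronglyMeasurable
  have hgint : Integrable (fun ω j => (P[fun ω' => f ω' j|H]) ω) P :=
    pi_integrable_of_comp ((hgmeas.mono hH).aestronglyMeasurable)
      (fun j => integrable_condExp)
  refine (ae_eq_condExp_of_forall_setIntegral_eq hH hf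
    (fun s _ _ => hgint.integrableOn) ?_ (hgmeas.aestronglyMeasurable)).symm
  intro s hs hμs
  funext j
  have h1 : (∫ x in s, (fun ω j => (P[fun ω' => f ω' j|H]) ω) x ∂P) j
      = ∫ x in s, (P[fun ω' => f ω' j|H]) x ∂P :=
    ((ContinuousLinearMap.proj (R := ℝ) (φ := fun _ : Fin d => ℝ) j).integral_comp_comm
      hgint.integrableOn).symm
  have h2 : (∫ x in s, f x ∂P) j = ∫ x in s, f x j ∂P :=
    ((ContinuousLinearMap.proj (R := ℝ) (φ := fun _ : Fin d => ℝ) j).integral_comp_comm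
      hf.integrableOn).symm
  rw [h1, h2]
  exact setIntegral_condExp hH (hcomp j) hs

/-- if the working outcome model is correct (`m1 = μ1⋆`, `m0 = μ0⋆` a.s.),
then for every `β`, `E[Ũ(β) | H] = I·p̃·(1−p̃)·(μ1⋆ − μ0⋆ − φᵀβ)·φ` a.s.; the
misspecified missingness model drops out. -/
theorem aipw_condexp_correct_outcome
    {Ω : Type*} (H : MeasurableSpace Ω) (G : MeasurableSpace Ω) {F : MeasurableSpace Ω} (P : Measure Ω) [IsProbabilityMeasure P]
    (hH : H ≤ F)
    (A p pt W : Ω → ℝ) (c : ℝ) (hc0 : 0 < c) (hc1 : c < 1/2)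
    (hA : Measurable A) (hA01 : ∀ ω, A ω = 0 ∨ A ω = 1)
    (hp : Measurable[H] p) (hpt : Measurable[H] pt)
    (hpb : ∀ᵐ ω ∂P, c ≤ p ω ∧ p ω ≤ 1 - c)
    (hptb : ∀ᵐ ω ∂P, c ≤ pt ω ∧ pt ω ≤ 1 - c)
    (hcond : P[A|H] =ᵐ[P] p)
    (hW : ∀ ω, W ω = if A ω = 1 then pt ω / p ω else (1 - pt ω) / (1 - p ω))
    (hG : G = H ⊔ MeasurableSpace.comap A inferInstance)
    (Y μ1 μ0 : Ω → ℝ) (hY : Integrable Y P)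
    (hμ1 : Measurable[H] μ1) (hμ0 : Measurable[H] μ0)
    (hμ1b : ∃ C, ∀ ω, |μ1 ω| ≤ C) (hμ0b : ∃ C, ∀ ω, |μ0 ω| ≤ C)
    (hreg : P[Y|G] =ᵐ[P] fun ω => A ω * μ1 ω + (1 - A ω) * μ0 ω)
    (R estar : Ω → ℝ) (hR : Measurable R) (hR01 : ∀ ω, R ω = 0 ∨ R ω = 1)
    (hestar : Measurable[G] estar) (hever : P[R|G] =ᵐ[P] estar)
    (hepos : ∀ᵐ ω ∂P, c ≤ estar ω)
    (hMAR : P[fun ω => R ω * Y ω|G] =ᵐ[P] fun ω => estar ω * (P[Y|G]) ω)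
    {d : ℕ} (Iav : Ω → ℝ) (hIav : Measurable[H] Iav) (hIav01 : ∀ ω, Iav ω = 0 ∨ Iav ω = 1)
    (φ : Ω → Fin d → ℝ) (hφ : Measurable[H] φ) (hφb : ∃ C, ∀ ω, ‖φ ω‖ ≤ C)
    (m1 m0 : Ω → ℝ) (hm1 : Measurable[H] m1) (hm0 : Measurable[H] m0)
    (hm1b : ∃ C, ∀ ω, |m1 ω| ≤ C) (hm0b : ∃ C, ∀ ω, |m0 ω| ≤ C)
    (e' : Ω → ℝ) (he' : Measurable[G] e') (he'b : ∀ᵐ ω ∂P, c ≤ e' ω ∧ e' ω ≤ 1)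
    (U : (Fin d → ℝ) → Ω → Fin d → ℝ)
    (hU : ∀ β ω, U β ω =
      (Iav ω * W ω * (A ω - pt ω) *
        ((R ω / e' ω) * (Y ω - A ω * m1 ω - (1 - A ω) * m0 ω)
          + (A ω + p ω - 1) * (m1 ω - m0 ω - ∑ j, φ ω j * β j))) • φ ω)
    (hcorrect1 : m1 =ᵐ[P] μ1) (hcorrect0 : m0 =ᵐ[P] μ0) :
    ∀ β : Fin d → ℝ, P[U β|H] =ᵐ[P]
      fun ω => (Iav ω * pt ω * (1 - pt ω) * (μ1 ω - μ0 ω - ∑ j, φ ω j * β j)) • φ ω := by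
  intro β
  classical
  -- σ-algebra relations
  have hHG : H ≤ G := hG ▸ le_sup_left
  have hGF : G ≤ F := by
    rw [hG]; exact sup_le hH hA.comap_le
  have hA_G : Measurable[G] A := by
    rw [hG]; exact (comap_measurable A).mono le_sup_right le_rfl
  have hAF : Measurable[F] A := hA
  have hRF : Measurable[F] R := hR
  -- constants
  obtain ⟨Cφ₀, hCφ₀⟩ := hφb
  obtain ⟨C1₀, hC1₀⟩ := hm1b
  obtain ⟨C0₀, hC0₀⟩ := hm0b
  set Cφ : ℝ := max Cφ₀ 0 with hCφdef
  set C1 : ℝ := max C1₀ 0 with hC1def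
  set C0 : ℝ := max C0₀ 0 with hC0def
  have hCφ : ∀ ω, ‖φ ω‖ ≤ Cφ := fun ω => le_max_of_le_left (hCφ₀ ω)
  have hC1 : ∀ ω, |m1 ω| ≤ C1 := fun ω => le_max_of_le_left (hC1₀ ω)
  have hC0 : ∀ ω, |m0 ω| ≤ C0 := fun ω => le_max_of_le_left (hC0₀ ω)
  have hCφ0 : 0 ≤ Cφ := le_max_right _ _
  have hC10 : 0 ≤ C1 := le_max_right _ _
  have hC00 : 0 ≤ C0 := le_max_right _ _
  have hφj : ∀ ω j, |φ ω j| ≤ Cφ := fun ω j => by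
    calc |φ ω j| = ‖φ ω j‖ := rfl
    _ ≤ ‖φ ω‖ := norm_le_pi_norm (φ ω) j
    _ ≤ Cφ := hCφ ω
  have hAb : ∀ ω, |A ω| ≤ 1 := fun ω => by rcases hA01 ω with h | h <;> simp [h]
  have hRb : ∀ ω, |R ω| ≤ 1 := fun ω => by rcases hR01 ω with h | h <;> simp [h]
  have hIb : ∀ ω, |Iav ω| ≤ 1 := fun ω => by rcases hIav01 ω with h | h <;> simp [h]
  have hc1' : c ≤ 1 - c := by linarith
  -- F-level measurability
  have hpF : Measurable[F] p := hp.mono hH le_rfl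
  have hptF : Measurable[F] pt := hpt.mono hH le_rfl
  have hm1F : Measurable[F] m1 := hm1.mono hH le_rfl
  have hm0F : Measurable[F] m0 := hm0.mono hH le_rfl
  have hIavF : Measurable[F] Iav := hIav.mono hH le_rfl
  have hφF : Measurable[F] φ := hφ.mono hH le_rfl
  have he'F : Measurable[F] e' := he'.mono hGF le_rfl
  have hW_G : Measurable[G] W := by
    have hWeq : W = fun ω => if A ω = 1 then pt ω / p ω else (1 - pt ω) / (1 - p ω) :=
      funext hW
    rw [hWeq]
    have hpG : Measurable[G] p := hp.mono hHG le_rfl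
    have hptG : Measurable[G] pt := hpt.mono hHG le_rfl
    exact Measurable.ite (hA_G (measurableSet_singleton 1)) (hptG.div hpG)
      ((measurable_const.sub hptG).div (measurable_const.sub hpG))
  have hWF : Measurable[F] W := hW_G.mono hGF le_rfl
  -- bounded-implies-integrable helpers
  have hint_bdd : ∀ (g : Ω → ℝ), @AEStronglyMeasurable Ω ℝ _ F F g P → ∀ C : ℝ,
      (∀ᵐ ω ∂P, |g ω| ≤ C) → Integrable g P := by
    intro g hg C hC
    refine (integrable_const C).mono' hg ?_
    filter_upwards [hC] with ω h using by simpa using h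
  -- the functions Z and B
  set Z : Ω → ℝ := fun ω => Y ω - A ω * m1 ω - (1 - A ω) * m0 ω with hZdef
  set B : Ω → ℝ := fun ω => A ω * m1 ω + (1 - A ω) * m0 ω with hBdef
  have hBb : ∀ ω, |B ω| ≤ C1 + C0 := fun ω => by
    rcases hA01 ω with h | h <;> simp [hBdef, h] <;>
      [exact (hC0 ω).trans (by linarith [hC10]); exact (hC1 ω).trans (by linarith [hC00])]
  have hBmF : Measurable[F] B := (hAF.mul hm1F).add ((measurable_const.sub hAF).mul hm0F)
  have hZint : Integrable Z P := by
    have h1 : Integrable (fun ω => A ω * m1 ω) P :=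
      hint_bdd _ (hAF.mul hm1F).aestronglyMeasurable C1
        (Filter.Eventually.of_forall fun ω => by
          calc |A ω * m1 ω| = |A ω| * |m1 ω| := abs_mul _ _
          _ ≤ 1 * C1 := mul_le_mul (hAb ω) (hC1 ω) (abs_nonneg _) zero_le_one
          _ = C1 := one_mul _)
    have h2 : Integrable (fun ω => (1 - A ω) * m0 ω) P :=
      hint_bdd _ ((measurable_const.sub hAF).mul hm0F).aestronglyMeasurable C0
        (Filter.Eventually.of_forall fun ω => by
          have : |1 - A ω| ≤ 1 := by rcases hA01 ω with h | h <;> simp [h]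
          calc |(1 - A ω) * m0 ω| = |1 - A ω| * |m0 ω| := abs_mul _ _
          _ ≤ 1 * C0 := mul_le_mul this (hC0 ω) (abs_nonneg _) zero_le_one
          _ = C0 := one_mul _)
    exact ((hY.sub h1).sub h2).congr (Filter.Eventually.of_forall fun ω => rfl)
  have hRZint : Integrable (fun ω => R ω * Z ω) P :=
    hZint.bdd_mul (c := 1) hRF.aestronglyMeasurable (Filter.Eventually.of_forall fun ω => by simpa using hRb ω)
  have hRYint : Integrable (fun ω => R ω * Y ω) P :=
    hY.bdd_mul (c := 1) hRF.aestronglyMeasurable (Filter.Eventually.of_forall fun ω => by simpa using hRb ω)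
  have hBRint : Integrable (fun ω => B ω * R ω) P :=
    hint_bdd _ (hBmF.mul hRF).aestronglyMeasurable (C1 + C0)
      (Filter.Eventually.of_forall fun ω => by
        calc |B ω * R ω| = |B ω| * |R ω| := abs_mul _ _
        _ ≤ (C1 + C0) * 1 := mul_le_mul (hBb ω) (hRb ω) (abs_nonneg _) (by linarith)
        _ = C1 + C0 := mul_one _)
  have hRint : Integrable R P :=
    hint_bdd _ hRF.aestronglyMeasurable 1 (Filter.Eventually.of_forall hRb)
  -- bound on W
  have hWb : ∀ᵐ ω ∂P, |W ω| ≤ (1 - c) / c := by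
    filter_upwards [hpb, hptb] with ω hpω hptω
    rw [hW ω]
    have hc2 : (0:ℝ) < 1 - c := by linarith
    split_ifs with h
    · rw [abs_of_nonneg (div_nonneg (by linarith [hptω.1]) (by linarith [hpω.1]))]
      exact div_le_div₀ (le_of_lt hc2) hptω.2 hc0 hpω.1
    · rw [abs_of_nonneg (div_nonneg (by linarith [hptω.2]) (by linarith [hpω.2]))]
      exact div_le_div₀ (le_of_lt hc2) (by linarith [hptω.1]) hc0 (by linarith [hpω.2])
  have hApt : ∀ᵐ ω ∂P, |A ω - pt ω| ≤ 1 := by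
    filter_upwards [hptb] with ω hptω
    rcases hA01 ω with h | h
    · rw [h, zero_sub, abs_neg, abs_of_nonneg (by linarith [hptω.1])]
      linarith [hptω.2]
    · rw [h, abs_of_nonneg (by linarith [hptω.2])]
      linarith [hptω.1]
  -- first part of the conditional expectation: P[R*Z | G] = 0
  have hBsm : StronglyMeasurable[G] B :=
    ((hA_G.mul (hm1.mono hHG le_rfl)).add
      ((measurable_const.sub hA_G).mul (hm0.mono hHG le_rfl))).stronglyMeasurable
  have hmulBR : P[fun ω => B ω * R ω|G] =ᵐ[P] fun ω => B ω * (P[R|G]) ω :=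
    condExp_mul_of_stronglyMeasurable_left hBsm hBRint hRint
  have hsplit : P[fun ω => R ω * Z ω|G] =ᵐ[P]
      fun ω => (P[fun ω' => R ω' * Y ω'|G]) ω - (P[fun ω' => B ω' * R ω'|G]) ω := by
    have heq : (fun ω => R ω * Z ω)
        = (fun ω => R ω * Y ω) - (fun ω => B ω * R ω) := by
      funext ω; simp only [Pi.sub_apply, hZdef, hBdef]; ring
    rw [heq]
    exact condExp_sub hRYint hBRint G
  have hRZ0 : P[fun ω => R ω * Z ω|G] =ᵐ[P] (0 : Ω → ℝ) := by
    filter_upwards [hsplit, hMAR, hmulBR, hever, hreg, hcorrect1, hcorrect0]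
      with ω e1 e2 e3 e4 e5 e6 e7
    rw [Pi.zero_apply, e1, e2, e3, e4, e5]
    simp only [hBdef, e6, e7]
    ring
  -- per-component results
  have key : ∀ j : Fin d, Integrable (fun ω => U β ω j) P ∧
      (P[fun ω => U β ω j|H] =ᵐ[P]
        fun ω => (Iav ω * pt ω * (1 - pt ω) * (μ1 ω - μ0 ω - ∑ i, φ ω i * β i)) * φ ω j) := by
    intro j
    set K : Ω → ℝ := fun ω => Iav ω * W ω * (A ω - pt ω) / e' ω * φ ω j with hKdef
    set f1 : Ω → ℝ := fun ω => K ω * (R ω * Z ω) with hf1def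
    set D : Ω → ℝ := fun ω =>
      Iav ω * pt ω * (1 - pt ω) * (m1 ω - m0 ω - ∑ i, φ ω i * β i) * φ ω j with hDdef
    have hφjH : Measurable[H] (fun ω => φ ω j) := (measurable_pi_apply j).comp hφ
    have hKG : Measurable[G] K :=
      ((((hIav.mono hHG le_rfl).mul hW_G).mul
        (hA_G.sub (hpt.mono hHG le_rfl))).div he').mul ((hφjH).mono hHG le_rfl)
    have hKsm : StronglyMeasurable[G] K := hKG.stronglyMeasurable
    have hKF : Measurable[F] K := hKG.mono hGF le_rfl
    -- bound for K
    set CK : ℝ := (1 - c) / c / c * Cφ with hCKdef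
    have hcc : (0:ℝ) ≤ (1 - c) / c := div_nonneg (by linarith) hc0.le
    have hKb : ∀ᵐ ω ∂P, |K ω| ≤ CK := by
      filter_upwards [hWb, hApt, he'b] with ω h1 h2 h3
      have he0 : (0:ℝ) < e' ω := lt_of_lt_of_le hc0 h3.1
      have e1 : |Iav ω * W ω| ≤ (1 - c) / c := by
        rw [abs_mul]
        calc |Iav ω| * |W ω| ≤ 1 * ((1 - c) / c) :=
              mul_le_mul (hIb ω) h1 (abs_nonneg _) zero_le_one
          _ = (1 - c) / c := one_mul _
      have e2 : |Iav ω * W ω * (A ω - pt ω)| ≤ (1 - c) / c := by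
        rw [abs_mul]
        calc |Iav ω * W ω| * |A ω - pt ω| ≤ (1 - c) / c * 1 :=
              mul_le_mul e1 h2 (abs_nonneg _) hcc
          _ = (1 - c) / c := mul_one _
      have e3 : |Iav ω * W ω * (A ω - pt ω) / e' ω| ≤ (1 - c) / c / c := by
        rw [abs_div, abs_of_pos he0]
        exact div_le_div₀ hcc e2 hc0 h3.1
      calc |K ω| = |Iav ω * W ω * (A ω - pt ω) / e' ω| * |φ ω j| := by
            simp only [hKdef]; rw [abs_mul]
        _ ≤ (1 - c) / c / c * Cφ :=
            mul_le_mul e3 (hφj ω j) (abs_nonneg _) (div_nonneg hcc hc0.le)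
        _ = CK := by rw [hCKdef]
    have hf1int : Integrable f1 P :=
      hRZint.bdd_mul (c := CK) hKF.aestronglyMeasurable
        (hKb.mono fun ω h => by simpa using h)
    have hDsm : StronglyMeasurable[H] D := by
      refine Measurable.stronglyMeasurable ?_
      exact ((((hIav.mul hpt).mul (measurable_const.sub hpt)).mul
        ((hm1.sub hm0).sub (Finset.measurable_sum Finset.univ
          fun i _ => ((measurable_pi_apply i).comp hφ).mul measurable_const))).mul hφjH)
    have hDint : Integrable D P := by
      set Cβ : ℝ := Cφ * ∑ i, |β i| with hCβdef
      have hsum : ∀ ω, |∑ i, φ ω i * β i| ≤ Cβ := fun ω => by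
        calc |∑ i, φ ω i * β i| ≤ ∑ i, |φ ω i * β i| := Finset.abs_sum_le_sum_abs _ _
        _ ≤ ∑ i, Cφ * |β i| := Finset.sum_le_sum fun i _ => by
            rw [abs_mul]; exact mul_le_mul_of_nonneg_right (hφj ω i) (abs_nonneg _)
        _ = Cβ := by rw [hCβdef, Finset.mul_sum]
      refine hint_bdd _ ((hDsm.mono hH).aestronglyMeasurable)
        ((C1 + C0 + Cβ) * Cφ) ?_
      filter_upwards [hptb] with ω hptω
      have hpt01 : |pt ω| ≤ 1 := by
        rw [abs_of_nonneg (by linarith [hptω.1])]; linarith [hptω.2]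
      have hpt01' : |1 - pt ω| ≤ 1 := by
        rw [abs_of_nonneg (by linarith [hptω.2])]; linarith [hptω.1]
      have hm : |m1 ω - m0 ω - ∑ i, φ ω i * β i| ≤ C1 + C0 + Cβ := by
        calc |m1 ω - m0 ω - ∑ i, φ ω i * β i|
            ≤ |m1 ω - m0 ω| + |∑ i, φ ω i * β i| := abs_sub _ _
          _ ≤ (|m1 ω| + |m0 ω|) + Cβ := add_le_add (abs_sub _ _) (hsum ω)
          _ ≤ C1 + C0 + Cβ := by linarith [hC1 ω, hC0 ω]
      have d1 : |Iav ω * pt ω| ≤ 1 := by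
        rw [abs_mul]
        calc |Iav ω| * |pt ω| ≤ 1 * 1 := mul_le_mul (hIb ω) hpt01 (abs_nonneg _) zero_le_one
          _ = 1 := one_mul _
      have d2 : |Iav ω * pt ω * (1 - pt ω)| ≤ 1 := by
        rw [abs_mul]
        calc |Iav ω * pt ω| * |1 - pt ω| ≤ 1 * 1 :=
              mul_le_mul d1 hpt01' (abs_nonneg _) zero_le_one
          _ = 1 := one_mul _
      have d3 : |Iav ω * pt ω * (1 - pt ω) * (m1 ω - m0 ω - ∑ i, φ ω i * β i)|
          ≤ C1 + C0 + Cβ := by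
        rw [abs_mul]
        calc |Iav ω * pt ω * (1 - pt ω)| * |m1 ω - m0 ω - ∑ i, φ ω i * β i|
            ≤ 1 * (C1 + C0 + Cβ) := mul_le_mul d2 hm (abs_nonneg _) zero_le_one
          _ = C1 + C0 + Cβ := one_mul _
      have hCβ0 : (0:ℝ) ≤ Cβ := by
        rw [hCβdef]
        exact mul_nonneg hCφ0 (Finset.sum_nonneg fun i _ => abs_nonneg _)
      calc |D ω| = |Iav ω * pt ω * (1 - pt ω) * (m1 ω - m0 ω - ∑ i, φ ω i * β i)|
            * |φ ω j| := by simp only [hDdef]; rw [abs_mul]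
        _ ≤ (C1 + C0 + Cβ) * Cφ :=
            mul_le_mul d3 (hφj ω j) (abs_nonneg _) (by linarith)
    -- decomposition
    have hdec : (fun ω => U β ω j) =ᵐ[P] f1 + D := by
      filter_upwards [hpb] with ω hpω
      have hp0 : p ω ≠ 0 := by linarith [hpω.1]
      have hp1 : (1:ℝ) - p ω ≠ 0 := by
        have : c ≤ 1 - p ω := by linarith [hpω.2]
        linarith
      have hWkey : W ω * (A ω - pt ω) * (A ω + p ω - 1) = pt ω * (1 - pt ω) := by
        rcases hA01 ω with h | h
        · rw [hW ω, if_neg (by rw [h]; norm_num), h]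
          field_simp
          ring
        · rw [hW ω, if_pos h, h]
          field_simp
          ring
      show U β ω j = f1 ω + D ω
      rw [hU β ω]
      simp only [Pi.smul_apply, smul_eq_mul, hf1def, hDdef, hKdef, hZdef]
      linear_combination (Iav ω * (m1 ω - m0 ω - ∑ i, φ ω i * β i) * φ ω j) * hWkey
    have hcompint : Integrable (fun ω => U β ω j) P :=
      (hf1int.add hDint).congr hdec.symm
    refine ⟨hcompint, ?_⟩
    -- P[f1|G] = 0
    have hf1G : P[f1|G] =ᵐ[P] (0 : Ω → ℝ) := by
      have hmul : P[f1|G] =ᵐ[P] fun ω => K ω * (P[fun ω' => R ω' * Z ω'|G]) ω :=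
        condExp_mul_of_stronglyMeasurable_left hKsm hf1int hRZint
      filter_upwards [hmul, hRZ0] with ω h1 h2
      rw [Pi.zero_apply, h1, h2, Pi.zero_apply, mul_zero]
    have hf1H : P[f1|H] =ᵐ[P] (0 : Ω → ℝ) := by
      calc P[f1|H] =ᵐ[P] P[P[f1|G]|H] := (condExp_condExp_of_le hHG hGF).symm
        _ =ᵐ[P] P[(0 : Ω → ℝ)|H] := condExp_congr_ae hf1G
        _ = 0 := condExp_zero
        _ =ᵐ[P] (0 : Ω → ℝ) := Filter.EventuallyEq.rfl
    have hDce : P[D|H] = D := condExp_of_stronglyMeasurable hH hDsm hDint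
    refine (condExp_congr_ae hdec).trans ((condExp_add hf1int hDint H).trans ?_)
    rw [hDce]
    filter_upwards [hf1H, hcorrect1, hcorrect0] with ω h1 h2 h3
    rw [Pi.add_apply, h1, Pi.zero_apply, zero_add]
    simp only [hDdef, h2, h3]
  -- assemble the vector statement
  have hUint : Integrable (U β) P :=
    pi_integrable_of_comp (pi_aesm_of_comp fun j => ((key j).1).aestronglyMeasurable)
      (fun j => (key j).1)
  refine (condexp_pi_aux hH hUint).trans ?_
  have hall := ae_all_iff.mpr (fun j => (key j).2)
  filter_upwards [hall] with ω hω
  funext j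
  simp only [Pi.smul_apply, smul_eq_mul]
  exact hω j
end

section
/- Suppose the working outcome model is correct, i.e., m1 = μ1⋆ and m0 = μ0⋆ a.s., while the working missingness model e' is arbitrary (G-measurable with c ≤ e' ≤ 1). Then for every β ∈ ℝ^d, the log-link augmented estimating function Ũ(β) := I·W·(A − p̃)·[(R/e')·exp(−A·φᵀβ)·(Y − A·m1 − (1−A)·m0) + (A + p − 1)·(exp(−φᵀβ)·m1 − m0)]·φ satisfies E[Ũ(β) | H] = I·p̃·(1−p̃)·(exp(−φᵀβ)·μ1⋆ − μ0⋆)·φ a.s. -/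
open MeasureTheory

lemma integral_proj_eq {Ω : Type*} {mΩ : MeasurableSpace Ω} (μ : Measure Ω) {d : ℕ}
    {g : Ω → Fin d → ℝ} (hg : Integrable g μ) (j : Fin d) :
    (∫ ω, g ω ∂μ) j = ∫ ω, g ω j ∂μ := by
  have := (ContinuousLinearMap.proj (R := ℝ) (φ := fun _ : Fin d => ℝ) j).integral_comp_comm hg
  simpa using this.symm

lemma condexp_smul_pullout {Ω : Type*} {F : MeasurableSpace Ω} (P : Measure Ω)
    [IsFiniteMeasure P] {m : MeasurableSpace Ω} (hm : m ≤ F) {d : ℕ}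
    {f : Ω → ℝ} {φ : Ω → Fin d → ℝ}
    (hφ : StronglyMeasurable[m] φ) {C : ℝ} (hφb : ∀ ω, ‖φ ω‖ ≤ C)
    (hf : Integrable f P) :
    (P[fun ω => f ω • φ ω | m]) =ᵐ[P] fun ω => (P[f|m]) ω • φ ω := by
  have hφF : AEStronglyMeasurable[F] φ P := (hφ.mono hm).aestronglyMeasurable
  have hφjF : ∀ j : Fin d, AEStronglyMeasurable[F] (fun ω => φ ω j) P := fun j =>
    (((continuous_apply j).comp_stronglyMeasurable hφ).mono hm).aestronglyMeasurable
  have hcF : AEStronglyMeasurable[F] (P[f|m]) P := (stronglyMeasurable_condExp.mono hm).aestronglyMeasurable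
  have hsmul_bdd : ∀ (g : Ω → ℝ), AEStronglyMeasurable[F] g P → Integrable g P →
      Integrable (fun ω => g ω • φ ω) P := by
    intro g hgm hgi
    refine Integrable.mono' (hgi.norm.const_mul C) (hgm.smul hφF) ?_
    filter_upwards with ω
    rw [norm_smul, mul_comm]
    exact mul_le_mul_of_nonneg_right (hφb ω) (norm_nonneg _)
  have hfφ : Integrable (fun ω => f ω • φ ω) P := hsmul_bdd f hf.aestronglyMeasurable hf
  have hφjb : ∀ (j : Fin d) ω, ‖φ ω j‖ ≤ C := fun j ω =>
    le_trans (norm_le_pi_norm (φ ω) j) (hφb ω)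
  have hfφj : ∀ j : Fin d, Integrable (fun ω => f ω * φ ω j) P := by
    intro j
    refine Integrable.mono' (hf.norm.const_mul C)
      (hf.aestronglyMeasurable.mul (((continuous_apply j).comp_stronglyMeasurable hφ).mono hm).aestronglyMeasurable (μ := P)) ?_
    filter_upwards with ω
    rw [norm_mul, mul_comm]
    exact mul_le_mul_of_nonneg_right (hφjb j ω) (norm_nonneg _)
  have hcoord : ∀ j : Fin d, (P[fun ω => f ω * φ ω j | m]) =ᵐ[P]
      fun ω => (P[f|m]) ω * φ ω j := by
    intro j
    have h1 : (P[fun ω => φ ω j * f ω | m]) =ᵐ[P] fun ω => φ ω j * (P[f|m]) ω := by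
      refine condExp_stronglyMeasurable_mul_of_bound hm
        ((continuous_apply j).comp_stronglyMeasurable hφ) hf C ?_
      filter_upwards with ω using hφjb j ω
    have hfun : (fun ω => φ ω j * f ω) = fun ω => f ω * φ ω j := by funext ω; ring
    rw [hfun] at h1
    exact h1.trans (Filter.Eventually.of_forall fun ω => mul_comm (φ ω j) ((P[f|m]) ω))
  have hgi : Integrable (fun ω => (P[f|m]) ω • φ ω) P :=
    hsmul_bdd _ hcF integrable_condExp
  symm
  refine ae_eq_condExp_of_forall_setIntegral_eq hm hfφ
    (fun s _ _ => hgi.restrict) (fun s hs hμs => ?_)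
    ((stronglyMeasurable_condExp (μ := P) (f := f)).smul hφ).aestronglyMeasurable
  funext j
  have e1 := integral_proj_eq (P.restrict s) hgi.restrict j
  have e2 := integral_proj_eq (P.restrict s) hfφ.restrict j
  simp only [Pi.smul_apply, smul_eq_mul] at e1 e2
  rw [e1, e2]
  have e3 : ∫ x in s, (P[f|m]) x * φ x j ∂P = ∫ x in s, (P[fun ω => f ω * φ ω j|m]) x ∂P :=
    integral_congr_ae (ae_restrict_of_ae (hcoord j).symm)
  rw [e3, setIntegral_condExp hm (hfφj j) hs]


lemma abs_mul_le_mul {a b x y : ℝ} (h1 : |a| ≤ x) (h2 : |b| ≤ y) : |a * b| ≤ x * y := by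
  rw [abs_mul]
  exact mul_le_mul h1 h2 (abs_nonneg _) (le_trans (abs_nonneg _) h1)

/-- log link, correct outcome model: for every `β`,
`E[Ũ(β) | H] = I·p̃·(1−p̃)·(exp(−φᵀβ)·μ1⋆ − μ0⋆)·φ` a.s. -/
theorem aipw_condexp_correct_outcome_log_link
    {Ω : Type*} (H : MeasurableSpace Ω) (G : MeasurableSpace Ω) {F : MeasurableSpace Ω} (P : Measure Ω) [IsProbabilityMeasure P]
    (hH : H ≤ F)
    (A p pt W : Ω → ℝ) (c : ℝ) (hc0 : 0 < c) (hc1 : c < 1/2)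
    (hA : Measurable A) (hA01 : ∀ ω, A ω = 0 ∨ A ω = 1)
    (hp : Measurable[H] p) (hpt : Measurable[H] pt)
    (hpb : ∀ᵐ ω ∂P, c ≤ p ω ∧ p ω ≤ 1 - c)
    (hptb : ∀ᵐ ω ∂P, c ≤ pt ω ∧ pt ω ≤ 1 - c)
    (hcond : P[A|H] =ᵐ[P] p)
    (hW : ∀ ω, W ω = if A ω = 1 then pt ω / p ω else (1 - pt ω) / (1 - p ω))
    (hG : G = H ⊔ MeasurableSpace.comap A inferInstance)
    (Y μ1 μ0 : Ω → ℝ) (hY : Integrable Y P)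
    (hμ1 : Measurable[H] μ1) (hμ0 : Measurable[H] μ0)
    (hμ1b : ∃ C, ∀ ω, |μ1 ω| ≤ C) (hμ0b : ∃ C, ∀ ω, |μ0 ω| ≤ C)
    (hreg : P[Y|G] =ᵐ[P] fun ω => A ω * μ1 ω + (1 - A ω) * μ0 ω)
    (R estar : Ω → ℝ) (hR : Measurable R) (hR01 : ∀ ω, R ω = 0 ∨ R ω = 1)
    (hestar : Measurable[G] estar) (hever : P[R|G] =ᵐ[P] estar)
    (hepos : ∀ᵐ ω ∂P, c ≤ estar ω)
    (hMAR : P[fun ω => R ω * Y ω|G] =ᵐ[P] fun ω => estar ω * (P[Y|G]) ω)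
    {d : ℕ} (Iav : Ω → ℝ) (hIav : Measurable[H] Iav) (hIav01 : ∀ ω, Iav ω = 0 ∨ Iav ω = 1)
    (φ : Ω → Fin d → ℝ) (hφ : Measurable[H] φ) (hφb : ∃ C, ∀ ω, ‖φ ω‖ ≤ C)
    (m1 m0 : Ω → ℝ) (hm1 : Measurable[H] m1) (hm0 : Measurable[H] m0)
    (hm1b : ∃ C, ∀ ω, |m1 ω| ≤ C) (hm0b : ∃ C, ∀ ω, |m0 ω| ≤ C)
    (e' : Ω → ℝ) (he' : Measurable[G] e') (he'b : ∀ᵐ ω ∂P, c ≤ e' ω ∧ e' ω ≤ 1)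
    (U : (Fin d → ℝ) → Ω → Fin d → ℝ)
    (hU : ∀ β ω, U β ω =
      (Iav ω * W ω * (A ω - pt ω) *
        ((R ω / e' ω) * Real.exp (-(A ω * ∑ j, φ ω j * β j))
            * (Y ω - A ω * m1 ω - (1 - A ω) * m0 ω)
          + (A ω + p ω - 1) * (Real.exp (-∑ j, φ ω j * β j) * m1 ω - m0 ω))) • φ ω)
    (hcorrect1 : m1 =ᵐ[P] μ1) (hcorrect0 : m0 =ᵐ[P] μ0) :
    ∀ β : Fin d → ℝ, P[U β|H] =ᵐ[P]
      fun ω => (Iav ω * pt ω * (1 - pt ω)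
        * (Real.exp (-∑ j, φ ω j * β j) * μ1 ω - μ0 ω)) • φ ω := by
  intro β
  obtain ⟨C1, hC1⟩ := hm1b
  obtain ⟨C0, hC0⟩ := hm0b
  obtain ⟨D1, hD1⟩ := hμ1b
  obtain ⟨D0, hD0⟩ := hμ0b
  obtain ⟨Cφ, hCφ⟩ := hφb
  have hHG : H ≤ G := hG ▸ le_sup_left
  have hGF : G ≤ F := by rw [hG]; exact sup_le hH hA.comap_le
  -- measurability
  have hA_G : Measurable[G] A := Measurable.of_comap_le (by rw [hG]; exact le_sup_right)
  have hW_G : Measurable[G] W := by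
    have hWfun : W = fun ω => if A ω = 1 then pt ω / p ω else (1 - pt ω) / (1 - p ω) :=
      funext hW
    rw [hWfun]
    exact Measurable.ite (hA_G (measurableSet_singleton 1))
      ((hpt.mono hHG le_rfl).div (hp.mono hHG le_rfl))
      ((measurable_const.sub (hpt.mono hHG le_rfl)).div
        (measurable_const.sub (hp.mono hHG le_rfl)))
  have hb_H : Measurable[H] (fun ω => ∑ j, φ ω j * β j) :=
    Finset.measurable_sum Finset.univ (fun j _ => ((measurable_pi_apply j).comp hφ).mul_const (β j))
  have hq_G : Measurable[G] (fun ω => (A ω * m1 ω + (1 - A ω) * m0 ω)) :=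
    (hA_G.mul (hm1.mono hHG le_rfl)).add
      ((measurable_const.sub hA_G).mul (hm0.mono hHG le_rfl))
  have hk_G : Measurable[G] (fun ω => (Iav ω * W ω * (A ω - pt ω) * Real.exp (-(A ω * (∑ j, φ ω j * β j))) * (e' ω)⁻¹)) :=
    (((((hIav.mono hHG le_rfl).mul hW_G).mul (hA_G.sub (hpt.mono hHG le_rfl))).mul
      (Real.measurable_exp.comp ((hA_G.mul (hb_H.mono hHG le_rfl)).neg))).mul he'.inv)
  have hS3_G : Measurable[G] (fun ω => (Iav ω * W ω * (A ω - pt ω) * ((A ω + p ω - 1) * (Real.exp (-(∑ j, φ ω j * β j)) * m1 ω - m0 ω)))) :=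
    ((((hIav.mono hHG le_rfl).mul hW_G).mul (hA_G.sub (hpt.mono hHG le_rfl))).mul
      (((hA_G.add (hp.mono hHG le_rfl)).sub measurable_const).mul
        (((Real.measurable_exp.comp (hb_H.mono hHG le_rfl).neg).mul
          (hm1.mono hHG le_rfl)).sub (hm0.mono hHG le_rfl))))
  have hT_H : Measurable[H] (fun ω => (Iav ω * pt ω * (1 - pt ω) * (Real.exp (-(∑ j, φ ω j * β j)) * μ1 ω - μ0 ω))) :=
    ((hIav.mul hpt).mul (measurable_const.sub hpt)).mul
      (((Real.measurable_exp.comp hb_H.neg).mul hμ1).sub hμ0)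
  -- pointwise bounds
  have hCb : ∀ ω, |∑ j, φ ω j * β j| ≤ Cφ * ∑ j, |β j| := by
    intro ω
    calc |∑ j, φ ω j * β j| ≤ ∑ j, |φ ω j * β j| := Finset.abs_sum_le_sum_abs _ _
      _ ≤ ∑ j, Cφ * |β j| := by
          refine Finset.sum_le_sum fun j _ => ?_
          rw [abs_mul]
          refine mul_le_mul_of_nonneg_right ?_ (abs_nonneg _)
          calc |φ ω j| = ‖φ ω j‖ := (Real.norm_eq_abs _).symm
            _ ≤ ‖φ ω‖ := norm_le_pi_norm (φ ω) j
            _ ≤ Cφ := hCφ ω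
      _ = Cφ * ∑ j, |β j| := by rw [Finset.mul_sum]
  have hCb0 : ∀ ω : Ω, (0:ℝ) ≤ Cφ * ∑ j, |β j| := fun ω => le_trans (abs_nonneg _) (hCb ω)
  have hexpA : ∀ ω, Real.exp (-(A ω * ∑ j, φ ω j * β j)) ≤ Real.exp (Cφ * ∑ j, |β j|) := by
    intro ω
    refine Real.exp_le_exp.mpr ?_
    rcases hA01 ω with h | h <;> rw [h]
    · simpa using hCb0 ω
    · rw [one_mul]
      exact le_trans (neg_le_abs _) (hCb ω)
  have hexpb : ∀ ω, Real.exp (-∑ j, φ ω j * β j) ≤ Real.exp (Cφ * ∑ j, |β j|) := by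
    intro ω
    exact Real.exp_le_exp.mpr (le_trans (neg_le_abs _) (hCb ω))
  have hIb : ∀ ω, |Iav ω| ≤ 1 := by
    intro ω; rcases hIav01 ω with h | h <;> rw [h] <;> norm_num
  have hRb : ∀ ω, |R ω| ≤ 1 := by
    intro ω; rcases hR01 ω with h | h <;> rw [h] <;> norm_num
  have hqb : ∀ ω, |A ω * m1 ω + (1 - A ω) * m0 ω| ≤ C1 + C0 := by
    intro ω
    have h1' := abs_nonneg (m1 ω); have h0' := abs_nonneg (m0 ω)
    have hm1' := abs_le.mp (hC1 ω); have hm0' := abs_le.mp (hC0 ω)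
    rcases hA01 ω with h | h <;> rw [h, abs_le] <;> constructor <;> nlinarith [hm1'.1, hm1'.2, hm0'.1, hm0'.2, h1', h0', hC1 ω, hC0 ω]
  -- a.e. bounds
  have hWb : ∀ᵐ ω ∂P, |W ω| ≤ (1 - c) / c := by
    filter_upwards [hpb, hptb] with ω hpω hptω
    rw [hW ω]
    rcases hA01 ω with h | h
    · rw [if_neg (by rw [h]; norm_num)]
      rw [abs_of_nonneg (div_nonneg (by linarith [hptω.2]) (by linarith [hpω.2]))]
      exact div_le_div₀ (by linarith) (by linarith [hptω.1]) (by linarith [hpω.2]) (by linarith [hpω.2])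
    · rw [if_pos h]
      rw [abs_of_nonneg (div_nonneg (by linarith [hptω.1]) (by linarith [hpω.1]))]
      exact div_le_div₀ (by linarith) (by linarith [hptω.2]) hc0 hpω.1
  have hApt : ∀ᵐ ω ∂P, |A ω - pt ω| ≤ 1 := by
    filter_upwards [hptb] with ω hptω
    rcases hA01 ω with h | h <;> rw [h, abs_le] <;> constructor <;> linarith [hptω.1, hptω.2]
  have hAp1 : ∀ᵐ ω ∂P, |A ω + p ω - 1| ≤ 1 := by
    filter_upwards [hpb] with ω hpω
    rcases hA01 ω with h | h <;> rw [h, abs_le] <;> constructor <;> linarith [hpω.1, hpω.2]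
  have hinve : ∀ᵐ ω ∂P, |(e' ω)⁻¹| ≤ c⁻¹ := by
    filter_upwards [he'b] with ω heω
    rw [abs_of_nonneg (inv_nonneg.mpr (by linarith [heω.1]))]
    exact inv_anti₀ hc0 heω.1
  have hkb : ∀ᵐ ω ∂P, |(Iav ω * W ω * (A ω - pt ω) * Real.exp (-(A ω * (∑ j, φ ω j * β j))) * (e' ω)⁻¹)| ≤ 1 * ((1 - c) / c) * 1 * Real.exp (Cφ * ∑ j, |β j|) * c⁻¹ := by
    filter_upwards [hWb, hApt, hinve] with ω h1 h2 h3
    exact abs_mul_le_mul (abs_mul_le_mul (abs_mul_le_mul (abs_mul_le_mul (hIb ω) h1) h2)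
      (by rw [abs_of_pos (Real.exp_pos _)]; exact hexpA ω)) h3
  have hS3b : ∀ᵐ ω ∂P, |(Iav ω * W ω * (A ω - pt ω) * ((A ω + p ω - 1) * (Real.exp (-(∑ j, φ ω j * β j)) * m1 ω - m0 ω)))| ≤
      1 * ((1 - c) / c) * 1 * (1 * (Real.exp (Cφ * ∑ j, |β j|) * C1 + C0)) := by
    filter_upwards [hWb, hApt, hAp1] with ω h1 h2 h3
    have hlast : |Real.exp (-(∑ j, φ ω j * β j)) * m1 ω - m0 ω| ≤
        Real.exp (Cφ * ∑ j, |β j|) * C1 + C0 := by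
      calc |Real.exp (-(∑ j, φ ω j * β j)) * m1 ω - m0 ω|
          ≤ |Real.exp (-(∑ j, φ ω j * β j)) * m1 ω| + |m0 ω| := abs_sub _ _
        _ ≤ Real.exp (Cφ * ∑ j, |β j|) * C1 + C0 := by
            refine add_le_add ?_ (hC0 ω)
            rw [abs_mul, abs_of_pos (Real.exp_pos _)]
            exact mul_le_mul (hexpb ω) (hC1 ω) (abs_nonneg _) (Real.exp_pos _).le
    exact abs_mul_le_mul (abs_mul_le_mul (abs_mul_le_mul (hIb ω) h1) h2)
      (abs_mul_le_mul h3 hlast)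
  have hTb : ∀ᵐ ω ∂P, |(Iav ω * pt ω * (1 - pt ω) * (Real.exp (-(∑ j, φ ω j * β j)) * μ1 ω - μ0 ω))| ≤
      1 * 1 * 1 * (Real.exp (Cφ * ∑ j, |β j|) * D1 + D0) := by
    filter_upwards [hptb] with ω hptω
    have hlast : |Real.exp (-(∑ j, φ ω j * β j)) * μ1 ω - μ0 ω| ≤
        Real.exp (Cφ * ∑ j, |β j|) * D1 + D0 := by
      calc |Real.exp (-(∑ j, φ ω j * β j)) * μ1 ω - μ0 ω|
          ≤ |Real.exp (-(∑ j, φ ω j * β j)) * μ1 ω| + |μ0 ω| := abs_sub _ _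
        _ ≤ Real.exp (Cφ * ∑ j, |β j|) * D1 + D0 := by
            refine add_le_add ?_ (hD0 ω)
            rw [abs_mul, abs_of_pos (Real.exp_pos _)]
            exact mul_le_mul (hexpb ω) (hD1 ω) (abs_nonneg _) (Real.exp_pos _).le
    have h2 : |pt ω| ≤ 1 := by
      rw [abs_of_nonneg (by linarith [hptω.1] : (0:ℝ) ≤ pt ω)]; linarith [hptω.2]
    have h3 : |1 - pt ω| ≤ 1 := by
      rw [abs_of_nonneg (by linarith [hptω.2] : (0:ℝ) ≤ 1 - pt ω)]; linarith [hptω.1]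
    exact abs_mul_le_mul (abs_mul_le_mul (abs_mul_le_mul (hIb ω) h2) h3) hlast
  -- integrability
  have hq_aesm : AEStronglyMeasurable[F] (fun ω => (A ω * m1 ω + (1 - A ω) * m0 ω)) P :=
    (hq_G.mono hGF le_rfl).stronglyMeasurable.aestronglyMeasurable
  have hq_int : Integrable (fun ω => (A ω * m1 ω + (1 - A ω) * m0 ω)) P :=
    Integrable.mono' (integrable_const (C1 + C0)) hq_aesm
      (Filter.Eventually.of_forall fun ω => by rw [Real.norm_eq_abs]; exact hqb ω)
  have hR_aesm : AEStronglyMeasurable[F] R P :=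
    hR.stronglyMeasurable.aestronglyMeasurable
  have hR_int : Integrable R P :=
    Integrable.mono' (integrable_const 1) hR_aesm
      (Filter.Eventually.of_forall fun ω => by rw [Real.norm_eq_abs]; exact hRb ω)
  have hRY_int : Integrable (fun ω => R ω * Y ω) P :=
    Integrable.bdd_mul hY hR_aesm (Filter.Eventually.of_forall fun ω => by rw [Real.norm_eq_abs]; exact hRb ω)
  have hqR_int : Integrable (fun ω => (A ω * m1 ω + (1 - A ω) * m0 ω) * R ω) P :=
    Integrable.bdd_mul hR_int hq_aesm (Filter.Eventually.of_forall fun ω => by rw [Real.norm_eq_abs]; exact hqb ω)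
  have hZ_int : Integrable (fun ω => (R ω * (Y ω - (A ω * m1 ω + (1 - A ω) * m0 ω)))) P :=
    Integrable.bdd_mul (hY.sub hq_int) hR_aesm (Filter.Eventually.of_forall fun ω => by rw [Real.norm_eq_abs]; exact hRb ω)
  have hk_aesm : AEStronglyMeasurable[F] (fun ω => (Iav ω * W ω * (A ω - pt ω) * Real.exp (-(A ω * (∑ j, φ ω j * β j))) * (e' ω)⁻¹)) P :=
    (hk_G.mono hGF le_rfl).stronglyMeasurable.aestronglyMeasurable
  have hkZ_int : Integrable (fun ω => (Iav ω * W ω * (A ω - pt ω) * Real.exp (-(A ω * (∑ j, φ ω j * β j))) * (e' ω)⁻¹) * (R ω * (Y ω - (A ω * m1 ω + (1 - A ω) * m0 ω)))) P :=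
    Integrable.bdd_mul hZ_int hk_aesm
      (by filter_upwards [hkb] with ω h; rw [Real.norm_eq_abs]; exact h)
  have hS3_aesm : AEStronglyMeasurable[F] (fun ω => (Iav ω * W ω * (A ω - pt ω) * ((A ω + p ω - 1) * (Real.exp (-(∑ j, φ ω j * β j)) * m1 ω - m0 ω)))) P :=
    (hS3_G.mono hGF le_rfl).stronglyMeasurable.aestronglyMeasurable
  have hS3_int : Integrable (fun ω => (Iav ω * W ω * (A ω - pt ω) * ((A ω + p ω - 1) * (Real.exp (-(∑ j, φ ω j * β j)) * m1 ω - m0 ω)))) P :=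
    Integrable.mono' (integrable_const _) hS3_aesm
      (by filter_upwards [hS3b] with ω h; rw [Real.norm_eq_abs]; exact h)
  have hs_int : Integrable (fun ω => ((Iav ω * W ω * (A ω - pt ω) * Real.exp (-(A ω * (∑ j, φ ω j * β j))) * (e' ω)⁻¹) * (R ω * (Y ω - (A ω * m1 ω + (1 - A ω) * m0 ω))) + (Iav ω * W ω * (A ω - pt ω) * ((A ω + p ω - 1) * (Real.exp (-(∑ j, φ ω j * β j)) * m1 ω - m0 ω))))) P := hkZ_int.add hS3_int
  -- conditional expectation computation at G
  have hq1 : P[(fun ω => (A ω * m1 ω + (1 - A ω) * m0 ω) * R ω)|G] =ᵐ[P] fun ω => (A ω * m1 ω + (1 - A ω) * m0 ω) * (P[R|G]) ω := by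
    have h := condExp_mul_of_stronglyMeasurable_left (μ := P) (m := G)
      hq_G.stronglyMeasurable (f := fun ω => (A ω * m1 ω + (1 - A ω) * m0 ω)) (g := R) (by exact hqR_int) hR_int
    exact h
  have hZ_cond : P[(fun ω => (R ω * (Y ω - (A ω * m1 ω + (1 - A ω) * m0 ω))))|G] =ᵐ[P] (fun _ => (0:ℝ)) := by
    have hZsplit : (fun ω => (R ω * (Y ω - (A ω * m1 ω + (1 - A ω) * m0 ω)))) = (fun ω => R ω * Y ω) - (fun ω => (A ω * m1 ω + (1 - A ω) * m0 ω) * R ω) := by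
      funext ω; simp only [Pi.sub_apply]; ring
    rw [hZsplit]
    have h2 := condExp_sub (μ := P) (m := G) hRY_int hqR_int
    filter_upwards [h2, hMAR, hreg, hq1, hever, hcorrect1, hcorrect0] with ω e2 eM er e1 ee ec1 ec0
    rw [e2, Pi.sub_apply, eM, er, e1, ee, ec1, ec0]
    ring
  have hkZ_cond : P[(fun ω => (Iav ω * W ω * (A ω - pt ω) * Real.exp (-(A ω * (∑ j, φ ω j * β j))) * (e' ω)⁻¹) * (R ω * (Y ω - (A ω * m1 ω + (1 - A ω) * m0 ω))))|G] =ᵐ[P] (fun _ => (0:ℝ)) := by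
    have h := condExp_mul_of_stronglyMeasurable_left (μ := P) (m := G)
      hk_G.stronglyMeasurable (f := fun ω => (Iav ω * W ω * (A ω - pt ω) * Real.exp (-(A ω * (∑ j, φ ω j * β j))) * (e' ω)⁻¹)) (g := fun ω => (R ω * (Y ω - (A ω * m1 ω + (1 - A ω) * m0 ω)))) (by exact hkZ_int) hZ_int
    have h' : P[(fun ω => (Iav ω * W ω * (A ω - pt ω) * Real.exp (-(A ω * (∑ j, φ ω j * β j))) * (e' ω)⁻¹) * (R ω * (Y ω - (A ω * m1 ω + (1 - A ω) * m0 ω))))|G] =ᵐ[P]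
        fun ω => (Iav ω * W ω * (A ω - pt ω) * Real.exp (-(A ω * (∑ j, φ ω j * β j))) * (e' ω)⁻¹) * (P[(fun ω => (R ω * (Y ω - (A ω * m1 ω + (1 - A ω) * m0 ω))))|G]) ω := h
    filter_upwards [h', hZ_cond] with ω e1 e2
    rw [e1, e2, mul_zero]
  have hS3_cond : P[(fun ω => (Iav ω * W ω * (A ω - pt ω) * ((A ω + p ω - 1) * (Real.exp (-(∑ j, φ ω j * β j)) * m1 ω - m0 ω))))|G] = fun ω => (Iav ω * W ω * (A ω - pt ω) * ((A ω + p ω - 1) * (Real.exp (-(∑ j, φ ω j * β j)) * m1 ω - m0 ω))) :=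
    condExp_of_stronglyMeasurable hGF hS3_G.stronglyMeasurable hS3_int
  have hS3T : ∀ᵐ ω ∂P, (Iav ω * W ω * (A ω - pt ω) * ((A ω + p ω - 1) * (Real.exp (-(∑ j, φ ω j * β j)) * m1 ω - m0 ω))) = (Iav ω * pt ω * (1 - pt ω) * (Real.exp (-(∑ j, φ ω j * β j)) * μ1 ω - μ0 ω)) := by
    filter_upwards [hpb, hptb, hcorrect1, hcorrect0] with ω hpω hptω ec1 ec0
    rw [hW ω, ec1, ec0]
    rcases hA01 ω with h | h
    · rw [if_neg (by rw [h]; norm_num), h]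
      have hne : (1:ℝ) - p ω ≠ 0 := by linarith [hpω.2, hc1]
      field_simp
      ring
    · rw [if_pos h, h]
      have hne : p ω ≠ 0 := by linarith [hpω.1]
      field_simp
      ring
  have hs_cond : P[(fun ω => ((Iav ω * W ω * (A ω - pt ω) * Real.exp (-(A ω * (∑ j, φ ω j * β j))) * (e' ω)⁻¹) * (R ω * (Y ω - (A ω * m1 ω + (1 - A ω) * m0 ω))) + (Iav ω * W ω * (A ω - pt ω) * ((A ω + p ω - 1) * (Real.exp (-(∑ j, φ ω j * β j)) * m1 ω - m0 ω)))))|G] =ᵐ[P] fun ω => (Iav ω * pt ω * (1 - pt ω) * (Real.exp (-(∑ j, φ ω j * β j)) * μ1 ω - μ0 ω)) := by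
    have hadd := condExp_add (μ := P) (m := G) hkZ_int hS3_int
    have hadd' : P[(fun ω => ((Iav ω * W ω * (A ω - pt ω) * Real.exp (-(A ω * (∑ j, φ ω j * β j))) * (e' ω)⁻¹) * (R ω * (Y ω - (A ω * m1 ω + (1 - A ω) * m0 ω))) + (Iav ω * W ω * (A ω - pt ω) * ((A ω + p ω - 1) * (Real.exp (-(∑ j, φ ω j * β j)) * m1 ω - m0 ω)))))|G] =ᵐ[P]
        P[(fun ω => (Iav ω * W ω * (A ω - pt ω) * Real.exp (-(A ω * (∑ j, φ ω j * β j))) * (e' ω)⁻¹) * (R ω * (Y ω - (A ω * m1 ω + (1 - A ω) * m0 ω))))|G] + P[(fun ω => (Iav ω * W ω * (A ω - pt ω) * ((A ω + p ω - 1) * (Real.exp (-(∑ j, φ ω j * β j)) * m1 ω - m0 ω))))|G] := hadd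
    filter_upwards [hadd', hkZ_cond, hS3T] with ω e1 e2 e3
    rw [e1, Pi.add_apply, e2, hS3_cond]
    simpa using e3
  -- pull out φ
  have hUeq : U β = fun ω => ((Iav ω * W ω * (A ω - pt ω) * Real.exp (-(A ω * (∑ j, φ ω j * β j))) * (e' ω)⁻¹) * (R ω * (Y ω - (A ω * m1 ω + (1 - A ω) * m0 ω))) + (Iav ω * W ω * (A ω - pt ω) * ((A ω + p ω - 1) * (Real.exp (-(∑ j, φ ω j * β j)) * m1 ω - m0 ω)))) • φ ω := by
    funext ω
    rw [hU β ω]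
    congr 1
    simp only [div_eq_mul_inv]
    ring
  have hφ_G : StronglyMeasurable[G] φ := (hφ.mono hHG le_rfl).stronglyMeasurable
  have hUG : P[U β|G] =ᵐ[P] fun ω => (Iav ω * pt ω * (1 - pt ω) * (Real.exp (-(∑ j, φ ω j * β j)) * μ1 ω - μ0 ω)) • φ ω := by
    rw [hUeq]
    have hpull := condexp_smul_pullout P hGF hφ_G hCφ hs_int
    filter_upwards [hpull, hs_cond] with ω e1 e2
    rw [e1, e2]
  -- tower property
  have hU_int : Integrable (U β) P := by
    rw [hUeq]
    refine Integrable.mono' (hs_int.norm.const_mul Cφ)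
      (hs_int.aestronglyMeasurable.smul
        ((hφ.mono hH le_rfl).stronglyMeasurable.aestronglyMeasurable (μ := P))) ?_
    refine Filter.Eventually.of_forall fun ω => ?_
    rw [norm_smul, mul_comm]
    exact mul_le_mul_of_nonneg_right (hCφ ω) (norm_nonneg _)
  have hTφ_int : Integrable (fun ω => (Iav ω * pt ω * (1 - pt ω) * (Real.exp (-(∑ j, φ ω j * β j)) * μ1 ω - μ0 ω)) • φ ω) P := by
    refine Integrable.mono'
      (integrable_const ((1 * 1 * 1 * (Real.exp (Cφ * ∑ j, |β j|) * D1 + D0)) * Cφ))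
      (((hT_H.mono hH le_rfl).stronglyMeasurable.aestronglyMeasurable (μ := P)).smul
        ((hφ.mono hH le_rfl).stronglyMeasurable.aestronglyMeasurable (μ := P))) ?_
    filter_upwards [hTb] with ω h
    rw [norm_smul, Real.norm_eq_abs]
    exact mul_le_mul h (hCφ ω) (norm_nonneg _) (le_trans (abs_nonneg _) h)
  have htower := (condExp_condExp_of_le (μ := P) (f := U β) hHG hGF).symm
  have hstep : P[P[U β|G]|H] =ᵐ[P] P[(fun ω => (Iav ω * pt ω * (1 - pt ω) * (Real.exp (-(∑ j, φ ω j * β j)) * μ1 ω - μ0 ω)) • φ ω)|H] := condExp_congr_ae hUG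
  have hfinal : P[(fun ω => (Iav ω * pt ω * (1 - pt ω) * (Real.exp (-(∑ j, φ ω j * β j)) * μ1 ω - μ0 ω)) • φ ω)|H] = fun ω => (Iav ω * pt ω * (1 - pt ω) * (Real.exp (-(∑ j, φ ω j * β j)) * μ1 ω - μ0 ω)) • φ ω :=
    condExp_of_stronglyMeasurable hH
      (hT_H.stronglyMeasurable.smul (hφ.stronglyMeasurable)) hTφ_int
  calc P[U β|H] =ᵐ[P] P[P[U β|G]|H] := htower
    _ =ᵐ[P] P[(fun ω => (Iav ω * pt ω * (1 - pt ω) * (Real.exp (-(∑ j, φ ω j * β j)) * μ1 ω - μ0 ω)) • φ ω)|H] := hstep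
    _ = fun ω => (Iav ω * pt ω * (1 - pt ω) * (Real.exp (-(∑ j, φ ω j * β j)) * μ1 ω - μ0 ω)) • φ ω := hfinal
end

section
/- (Gram-matrix identity for the derivative of the estimating equation, identity link.) Let W be the stabilized weight W := p̃/p on {A = 1} and W := (1−p̃)/(1−p) on {A = 0}, I : Ω → {0,1} an H-measurable availability indicator, and φ : Ω → ℝ^d bounded H-measurable. Then E[I·W·(A − p̃)·(A + p − 1)·φ·φᵀ] = E[I·p̃·(1−p̃)·φ·φᵀ] (equality of d×d matrices of expectations). In particular, the negative expected derivative with respect to β of the identity-link augmented estimating function equals E[I·p̃·(1−p̃)·φ·φᵀ], regardless of the working missingness and outcome models. -/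
open MeasureTheory

/-- Gram-matrix identity, identity link:
`E[I·W·(A − p̃)·(A + p − 1)·φ·φᵀ] = E[I·p̃·(1−p̃)·φ·φᵀ]` entrywise; this is the negative
expected derivative in `β` of the identity-link augmented estimating function,
regardless of the working missingness and outcome models. -/
theorem aipw_gram_matrix_identity
    {Ω : Type*} (H : MeasurableSpace Ω) {F : MeasurableSpace Ω} (P : Measure Ω) [IsProbabilityMeasure P]
    (hH : H ≤ F)
    (A p pt W : Ω → ℝ) (c : ℝ) (hc0 : 0 < c) (hc1 : c < 1/2)
    (hA : Measurable A) (hA01 : ∀ ω, A ω = 0 ∨ A ω = 1)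
    (hp : Measurable[H] p) (hpt : Measurable[H] pt)
    (hpb : ∀ᵐ ω ∂P, c ≤ p ω ∧ p ω ≤ 1 - c)
    (hptb : ∀ᵐ ω ∂P, c ≤ pt ω ∧ pt ω ≤ 1 - c)
    (hcond : P[A|H] =ᵐ[P] p)
    (hW : ∀ ω, W ω = if A ω = 1 then pt ω / p ω else (1 - pt ω) / (1 - p ω))
    {d : ℕ} (Iav : Ω → ℝ) (hIav : Measurable[H] Iav) (hIav01 : ∀ ω, Iav ω = 0 ∨ Iav ω = 1)
    (φ : Ω → Fin d → ℝ) (hφ : Measurable[H] φ) (hφb : ∃ C, ∀ ω, ‖φ ω‖ ≤ C) :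
    ∀ j k : Fin d,
      ∫ ω, Iav ω * W ω * (A ω - pt ω) * (A ω + p ω - 1) * φ ω j * φ ω k ∂P
        = ∫ ω, Iav ω * pt ω * (1 - pt ω) * φ ω j * φ ω k ∂P := by
  intro j k
  refine integral_congr_ae ?_
  filter_upwards [hpb] with ω ⟨h1, h2⟩
  have hp0 : p ω ≠ 0 := by linarith
  have hp1 : 1 - p ω ≠ 0 := by linarith
  rcases hA01 ω with h | h <;> rw [hW ω, h] <;> simp <;> field_simp <;> ring <;> simp
end

section
/- (Unbiasedness of the full-data estimating function at the true parameter, log link.) Suppose p̃ and φ are measurable with respect to the σ-algebra S₁ := σ(S ∪ σ(I)) ⊆ H and that the log-link causal excursion effect model holds: E[I·(exp(−φᵀβ⋆)·μ1⋆ − μ0⋆) | S₁] = 0 a.s. for a fixed β⋆ ∈ ℝ^d. Then for arbitrary bounded H-measurable working outcome model (m1, m0), the full-data estimating function U(β) := I·W·(A − p̃)·[exp(−A·φᵀβ)·Y − (1−p)·exp(−φᵀβ)·m1 − p·m0]·φ is unbiased at β⋆: E[U(β⋆)] = 0. -/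
open MeasureTheory

section AuxDefs
variable {Ω : Type*} {F : MeasurableSpace Ω} {P : Measure Ω}

def AEBddAux (P : Measure Ω) (f : Ω → ℝ) : Prop := ∃ C : ℝ, ∀ᵐ ω ∂P, |f ω| ≤ C

namespace AEBddAux

variable {f g : Ω → ℝ}

lemma of_forall {C : ℝ} (h : ∀ ω, |f ω| ≤ C) : AEBddAux P f :=
  ⟨C, Filter.Eventually.of_forall h⟩

lemma nonneg_const [IsProbabilityMeasure P] {C : ℝ} (h : ∀ᵐ ω ∂P, |f ω| ≤ C) : 0 ≤ C := by
  have : (MeasureTheory.ae P).NeBot := ae_neBot.mpr (IsProbabilityMeasure.ne_zero P)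
  obtain ⟨ω, hω⟩ := h.exists
  exact (abs_nonneg _).trans hω

lemma mul [IsProbabilityMeasure P] (hf : AEBddAux P f) (hg : AEBddAux P g) :
    AEBddAux P (fun ω => f ω * g ω) := by
  obtain ⟨C, hC⟩ := hf; obtain ⟨D, hD⟩ := hg
  refine ⟨C * D, ?_⟩
  filter_upwards [hC, hD] with ω h1 h2
  rw [abs_mul]
  exact mul_le_mul h1 h2 (abs_nonneg _) (nonneg_const hC)

lemma add (hf : AEBddAux P f) (hg : AEBddAux P g) :
    AEBddAux P (fun ω => f ω + g ω) := by
  obtain ⟨C, hC⟩ := hf; obtain ⟨D, hD⟩ := hg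
  refine ⟨C + D, ?_⟩
  filter_upwards [hC, hD] with ω h1 h2
  exact (abs_add_le _ _).trans (add_le_add h1 h2)

lemma neg (hf : AEBddAux P f) : AEBddAux P (fun ω => -f ω) := by
  obtain ⟨C, hC⟩ := hf
  exact ⟨C, by filter_upwards [hC] with ω h1; simpa using h1⟩

lemma sub (hf : AEBddAux P f) (hg : AEBddAux P g) :
    AEBddAux P (fun ω => f ω - g ω) := by
  obtain ⟨C, hC⟩ := hf; obtain ⟨D, hD⟩ := hg
  refine ⟨C + D, ?_⟩
  filter_upwards [hC, hD] with ω h1 h2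
  exact (abs_sub _ _).trans (add_le_add h1 h2)

lemma integrable [IsFiniteMeasure P] (hf : AEBddAux P f) (hm : AEStronglyMeasurable f P) :
    Integrable f P := by
  obtain ⟨C, hC⟩ := hf
  exact Integrable.mono' (integrable_const C) hm (by simpa [Real.norm_eq_abs] using hC)

end AEBddAux

lemma integral_mul_eq_integral_mul_condexp [IsProbabilityMeasure P]
    {m : MeasurableSpace Ω} (hm : m ≤ F) {g : Ω → ℝ} (f : Ω → ℝ)
    (hgm : StronglyMeasurable[m] g) (hgb : AEBddAux P g) (hf : Integrable f P) :
    ∫ ω, g ω * f ω ∂P = ∫ ω, g ω * (P[f|m]) ω ∂P := by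
  obtain ⟨C, hC⟩ := hgb
  have hgF : AEStronglyMeasurable[F] g P := (hgm.mono hm).aestronglyMeasurable
  have hgf : Integrable (fun ω => g ω * f ω) P :=
    hf.bdd_mul hgF (by simpa [Real.norm_eq_abs] using hC)
  have h1 : ∫ ω, g ω * f ω ∂P = ∫ ω, (P[(fun ω => g ω * f ω)|m]) ω ∂P :=
    (integral_condExp hm).symm
  rw [h1]
  refine integral_congr_ae ?_
  have h2 := condExp_mul_of_stronglyMeasurable_left hgm
    (show Integrable (g * f) P from hgf) hf
  filter_upwards [h2] with ω hω
  exact hω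

lemma integral_apply_fin {Ω : Type*} {F : MeasurableSpace Ω} {P : Measure Ω} {d : ℕ}
    {f : Ω → Fin d → ℝ} (hf : Integrable f P) (j : Fin d) :
    (∫ ω, f ω ∂P) j = ∫ ω, f ω j ∂P := by
  have h := (ContinuousLinearMap.proj (R := ℝ) (φ := fun _ : Fin d => ℝ) j).integral_comp_comm hf
  simpa using h.symm

end AuxDefs

/-- unbiasedness of the full-data estimating function at the true
parameter, log link. -/
theorem full_data_estimating_function_unbiased_log_link
    {Ω : Type*} (H : MeasurableSpace Ω) (G : MeasurableSpace Ω) (S S1 : MeasurableSpace Ω) {F : MeasurableSpace Ω} (P : Measure Ω) [IsProbabilityMeasure P]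
    (hH : H ≤ F)
    (A p pt W : Ω → ℝ) (c : ℝ) (hc0 : 0 < c) (hc1 : c < 1/2)
    (hA : Measurable A) (hA01 : ∀ ω, A ω = 0 ∨ A ω = 1)
    (hp : Measurable[H] p) (hpt : Measurable[H] pt)
    (hpb : ∀ᵐ ω ∂P, c ≤ p ω ∧ p ω ≤ 1 - c)
    (hptb : ∀ᵐ ω ∂P, c ≤ pt ω ∧ pt ω ≤ 1 - c)
    (hcond : P[A|H] =ᵐ[P] p)
    (hW : ∀ ω, W ω = if A ω = 1 then pt ω / p ω else (1 - pt ω) / (1 - p ω))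
    (hG : G = H ⊔ MeasurableSpace.comap A inferInstance)
    (Y μ1 μ0 : Ω → ℝ) (hY : Integrable Y P)
    (hμ1 : Measurable[H] μ1) (hμ0 : Measurable[H] μ0)
    (hμ1b : ∃ C, ∀ ω, |μ1 ω| ≤ C) (hμ0b : ∃ C, ∀ ω, |μ0 ω| ≤ C)
    (hreg : P[Y|G] =ᵐ[P] fun ω => A ω * μ1 ω + (1 - A ω) * μ0 ω)
    {d : ℕ} (Iav : Ω → ℝ) (hIav : Measurable[H] Iav) (hIav01 : ∀ ω, Iav ω = 0 ∨ Iav ω = 1)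
    (φ : Ω → Fin d → ℝ) (hφ : Measurable[H] φ) (hφb : ∃ C, ∀ ω, ‖φ ω‖ ≤ C)
    (m1 m0 : Ω → ℝ) (hm1 : Measurable[H] m1) (hm0 : Measurable[H] m0)
    (hm1b : ∃ C, ∀ ω, |m1 ω| ≤ C) (hm0b : ∃ C, ∀ ω, |m0 ω| ≤ C)
    (U : (Fin d → ℝ) → Ω → Fin d → ℝ)
    (hU : ∀ β ω, U β ω =
      (Iav ω * W ω * (A ω - pt ω) *
        (Real.exp (-(A ω * ∑ j, φ ω j * β j)) * Y ω
          - (1 - p ω) * Real.exp (-∑ j, φ ω j * β j) * m1 ω - p ω * m0 ω)) • φ ω)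
    (hS : S ≤ H)
    (hS1 : S1 = S ⊔ MeasurableSpace.comap Iav inferInstance)
    (hptS : Measurable[S1] pt) (hφS : Measurable[S1] φ)
    (βstar : Fin d → ℝ)
    (hCEE : P[fun ω => Iav ω * (Real.exp (-∑ j, φ ω j * βstar j) * μ1 ω - μ0 ω)|S1]
      =ᵐ[P] 0)
    :
    ∫ ω, U βstar ω ∂P = 0 := by
  classical
  -- σ-algebra inequalities
  have hS1H : S1 ≤ H := by
    rw [hS1]; exact sup_le hS (measurable_iff_comap_le.mp hIav)
  have hS1F : S1 ≤ F := hS1H.trans hH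
  have hHG : H ≤ G := hG ▸ le_sup_left
  have mA : Measurable[F] A := hA
  have hGF : G ≤ F := by
    rw [hG]; exact sup_le hH (measurable_iff_comap_le.mp mA)
  have hAG : Measurable[G] A := by
    rw [hG]; exact measurable_iff_comap_le.mpr le_sup_right
  -- F-level measurability of the ingredients
  have mp : Measurable[F] p := hp.mono hH le_rfl
  have mpt : Measurable[F] pt := hpt.mono hH le_rfl
  have mI : Measurable[F] Iav := hIav.mono hH le_rfl
  have mμ1 : Measurable[F] μ1 := hμ1.mono hH le_rfl
  have mμ0 : Measurable[F] μ0 := hμ0.mono hH le_rfl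
  have mm1 : Measurable[F] m1 := hm1.mono hH le_rfl
  have mm0 : Measurable[F] m0 := hm0.mono hH le_rfl
  have mφ : Measurable[F] φ := hφ.mono hH le_rfl
  have me : Measurable[F] fun ω => ∑ i, φ ω i * βstar i :=
    Finset.measurable_sum _ fun i _ => ((measurable_pi_apply i).comp mφ).mul_const _
  have mexp : Measurable[F] fun ω => Real.exp (-∑ i, φ ω i * βstar i) :=
    Real.measurable_exp.comp me.neg
  -- bounds
  have hne : Nonempty Ω := by
    by_contra h
    rw [not_nonempty_iff] at h
    exact IsProbabilityMeasure.ne_zero P (P.eq_zero_of_isEmpty)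
  obtain ⟨Cφ, hCφ⟩ := hφb
  obtain ⟨C1, hC1⟩ := hμ1b
  obtain ⟨C0, hC0⟩ := hμ0b
  obtain ⟨D1, hD1⟩ := hm1b
  obtain ⟨D0, hD0⟩ := hm0b
  have hCφ0 : 0 ≤ Cφ := le_trans (norm_nonneg _) (hCφ hne.some)
  have hφje : ∀ ω (i : Fin d), |φ ω i| ≤ Cφ := fun ω i => by
    calc |φ ω i| = ‖φ ω i‖ := (Real.norm_eq_abs _).symm
    _ ≤ ‖φ ω‖ := norm_le_pi_norm (φ ω) i
    _ ≤ Cφ := hCφ ω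
  have hCe0 : (0:ℝ) ≤ ∑ i, Cφ * |βstar i| :=
    Finset.sum_nonneg fun i _ => mul_nonneg hCφ0 (abs_nonneg _)
  have hebound : ∀ ω, |∑ i, φ ω i * βstar i| ≤ ∑ i, Cφ * |βstar i| := fun ω => by
    calc |∑ i, φ ω i * βstar i| ≤ ∑ i, |φ ω i * βstar i| := Finset.abs_sum_le_sum_abs _ _
    _ ≤ ∑ i, Cφ * |βstar i| := Finset.sum_le_sum fun i _ => by
        rw [abs_mul]; exact mul_le_mul_of_nonneg_right (hφje ω i) (abs_nonneg _)
  have hexpb : ∀ ω, |Real.exp (-∑ i, φ ω i * βstar i)| ≤ Real.exp (∑ i, Cφ * |βstar i|) := by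
    intro ω
    rw [abs_of_pos (Real.exp_pos _)]
    refine Real.exp_le_exp.mpr ?_
    have h1 := hebound ω; rw [abs_le] at h1
    linarith [h1.1]
  -- a.e.-bounded atoms
  have bA : AEBddAux P A := AEBddAux.of_forall (C := 1) fun ω => by
    rcases hA01 ω with h | h <;> rw [h] <;> norm_num
  have b1A : AEBddAux P (fun ω => 1 - A ω) := AEBddAux.of_forall (C := 1) fun ω => by
    rcases hA01 ω with h | h <;> rw [h] <;> norm_num
  have bI : AEBddAux P Iav := AEBddAux.of_forall (C := 1) fun ω => by
    rcases hIav01 ω with h | h <;> rw [h] <;> norm_num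
  have bp : AEBddAux P p := ⟨1, by
    filter_upwards [hpb] with ω h
    rw [abs_le]; constructor <;> linarith [h.1, h.2]⟩
  have b1p : AEBddAux P (fun ω => 1 - p ω) := ⟨1, by
    filter_upwards [hpb] with ω h
    rw [abs_le]; constructor <;> linarith [h.1, h.2]⟩
  have bpt : AEBddAux P pt := ⟨1, by
    filter_upwards [hptb] with ω h
    rw [abs_le]; constructor <;> linarith [h.1, h.2]⟩
  have b1pt : AEBddAux P (fun ω => 1 - pt ω) := ⟨1, by
    filter_upwards [hptb] with ω h
    rw [abs_le]; constructor <;> linarith [h.1, h.2]⟩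
  have bdiv1 : AEBddAux P (fun ω => pt ω / p ω) := ⟨(1 - c)/c, by
    filter_upwards [hpb, hptb] with ω h1 h2
    have hnn : 0 ≤ pt ω / p ω := div_nonneg (by linarith [h2.1]) (by linarith [h1.1])
    rw [abs_of_nonneg hnn]
    exact div_le_div₀ (by linarith) h2.2 hc0 h1.1⟩
  have bdiv0 : AEBddAux P (fun ω => (1 - pt ω) / (1 - p ω)) := ⟨(1 - c)/c, by
    filter_upwards [hpb, hptb] with ω h1 h2
    have hnn : 0 ≤ (1 - pt ω) / (1 - p ω) :=
      div_nonneg (by linarith [h2.2]) (by linarith [h1.2])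
    rw [abs_of_nonneg hnn]
    exact div_le_div₀ (by linarith) (by linarith [h2.1]) hc0 (by linarith [h1.2])⟩
  have bexp : AEBddAux P (fun ω => Real.exp (-∑ i, φ ω i * βstar i)) :=
    AEBddAux.of_forall hexpb
  have bμ1 : AEBddAux P μ1 := AEBddAux.of_forall hC1
  have bμ0 : AEBddAux P μ0 := AEBddAux.of_forall hC0
  have bm1 : AEBddAux P m1 := AEBddAux.of_forall hD1
  have bm0 : AEBddAux P m0 := AEBddAux.of_forall hD0
  -- integrability of A and 1 - A
  have iA : Integrable A P := bA.integrable mA.aestronglyMeasurable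
  have i1A : Integrable (fun ω => 1 - A ω) P :=
    b1A.integrable (measurable_const.sub mA).aestronglyMeasurable
  -- conditional expectation of 1 - A
  have hcondc : P[fun ω => 1 - A ω|H] =ᵐ[P] fun ω => 1 - p ω := by
    have hsub := condExp_sub (m := H) (μ := P) (integrable_const (1:ℝ)) iA
    have hconst : P[fun _ : Ω => (1:ℝ)|H] = fun _ => 1 := condExp_const hH 1
    have heq : (fun ω => 1 - A ω) = (fun _ : Ω => (1:ℝ)) - A := rfl
    rw [heq]
    filter_upwards [hsub, hcond] with ω h1ω h2ω
    rw [h1ω, Pi.sub_apply, hconst, h2ω]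
  -- componentwise result
  have hcomp : ∀ j : Fin d, ∫ ω, U βstar ω j ∂P = 0 := by
    intro j
    have mφj : Measurable[F] fun ω => φ ω j := (measurable_pi_apply j).comp mφ
    have bφj : AEBddAux P (fun ω => φ ω j) := AEBddAux.of_forall fun ω => hφje ω j
    set B : Ω → ℝ := fun ω =>
      (1 - p ω) * Real.exp (-∑ i, φ ω i * βstar i) * m1 ω + p ω * m0 ω with hB
    set q1 : Ω → ℝ := fun ω => Iav ω * (pt ω / p ω) * (1 - pt ω) * φ ω j with hq1
    set q0 : Ω → ℝ := fun ω => Iav ω * ((1 - pt ω) / (1 - p ω)) * (-pt ω) * φ ω j with hq0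
    set γ : Ω → ℝ := fun ω =>
      A ω * (q1 ω * Real.exp (-∑ i, φ ω i * βstar i)) + (1 - A ω) * q0 ω with hγ
    set α : Ω → ℝ := fun ω => (A ω * q1 ω + (1 - A ω) * q0 ω) * (-B ω) with hα
    set h1 : Ω → ℝ := fun ω =>
      q1 ω * (Real.exp (-∑ i, φ ω i * βstar i) * μ1 ω - B ω) with hh1
    set h0 : Ω → ℝ := fun ω => q0 ω * (μ0 ω - B ω) with hh0
    set k : Ω → ℝ := fun ω => pt ω * (1 - pt ω) * φ ω j with hk
    -- boundedness
    have bB : AEBddAux P B := ((b1p.mul bexp).mul bm1).add (bp.mul bm0)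
    have bq1 : AEBddAux P q1 := ((bI.mul bdiv1).mul b1pt).mul bφj
    have bq0 : AEBddAux P q0 := ((bI.mul bdiv0).mul bpt.neg).mul bφj
    have bγ : AEBddAux P γ := (bA.mul (bq1.mul bexp)).add (b1A.mul bq0)
    have bα : AEBddAux P α := ((bA.mul bq1).add (b1A.mul bq0)).mul bB.neg
    have bh1 : AEBddAux P h1 := bq1.mul ((bexp.mul bμ1).sub bB)
    have bh0 : AEBddAux P h0 := bq0.mul (bμ0.sub bB)
    have bk : AEBddAux P k := (bpt.mul b1pt).mul bφj
    -- F-level measurability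
    have mB : Measurable[F] B := by
      rw [hB]
      exact (((measurable_const.sub mp).mul mexp).mul mm1).add (mp.mul mm0)
    have mq1 : Measurable[F] q1 := by
      rw [hq1]
      exact ((mI.mul (mpt.div mp)).mul (measurable_const.sub mpt)).mul mφj
    have mq0 : Measurable[F] q0 := by
      rw [hq0]
      exact ((mI.mul ((measurable_const.sub mpt).div (measurable_const.sub mp))).mul
        mpt.neg).mul mφj
    have mγ : Measurable[F] γ := by
      rw [hγ]
      exact (mA.mul (mq1.mul mexp)).add ((measurable_const.sub mA).mul mq0)
    have mα : Measurable[F] α := by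
      rw [hα]
      exact ((mA.mul mq1).add ((measurable_const.sub mA).mul mq0)).mul mB.neg
    have mh1 : Measurable[F] h1 := by
      rw [hh1]
      exact mq1.mul ((mexp.mul mμ1).sub mB)
    have mh0 : Measurable[F] h0 := by
      rw [hh0]
      exact mq0.mul (mμ0.sub mB)
    -- sub-σ-algebra strong measurability
    have meH : Measurable[H] fun ω => ∑ i, φ ω i * βstar i :=
      Finset.measurable_sum _ fun i _ => ((measurable_pi_apply i).comp hφ).mul_const _
    have mexpH : Measurable[H] fun ω => Real.exp (-∑ i, φ ω i * βstar i) :=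
      Real.measurable_exp.comp meH.neg
    have mφjH : Measurable[H] fun ω => φ ω j := (measurable_pi_apply j).comp hφ
    have mBH : Measurable[H] B := by
      rw [hB]
      exact (((measurable_const.sub hp).mul mexpH).mul hm1).add (hp.mul hm0)
    have mq1H : Measurable[H] q1 := by
      rw [hq1]
      exact ((hIav.mul (hpt.div hp)).mul (measurable_const.sub hpt)).mul mφjH
    have mq0H : Measurable[H] q0 := by
      rw [hq0]
      exact ((hIav.mul ((measurable_const.sub hpt).div (measurable_const.sub hp))).mul
        hpt.neg).mul mφjH
    have sh1 : StronglyMeasurable[H] h1 := by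
      rw [hh1]
      exact (mq1H.mul ((mexpH.mul hμ1).sub mBH)).stronglyMeasurable
    have sh0 : StronglyMeasurable[H] h0 := by
      rw [hh0]
      exact (mq0H.mul (hμ0.sub mBH)).stronglyMeasurable
    have sγ : StronglyMeasurable[G] γ := by
      rw [hγ]
      exact ((hAG.mul ((mq1H.mono hHG le_rfl).mul (mexpH.mono hHG le_rfl))).add
        ((measurable_const.sub hAG).mul (mq0H.mono hHG le_rfl))).stronglyMeasurable
    have mφjS : Measurable[S1] fun ω => φ ω j := (measurable_pi_apply j).comp hφS
    have sk : StronglyMeasurable[S1] k := by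
      rw [hk]
      exact ((hptS.mul (measurable_const.sub hptS)).mul mφjS).stronglyMeasurable
    -- integrabilities
    have iγY : Integrable (fun ω => γ ω * Y ω) P := by
      obtain ⟨C, hC⟩ := bγ
      exact hY.bdd_mul mγ.aestronglyMeasurable (by simpa [Real.norm_eq_abs] using hC)
    have iα : Integrable α P := bα.integrable mα.aestronglyMeasurable
    have iγM : Integrable (fun ω => γ ω * (A ω * μ1 ω + (1 - A ω) * μ0 ω)) P :=
      (bγ.mul ((bA.mul bμ1).add (b1A.mul bμ0))).integrable
        (mγ.mul ((mA.mul mμ1).add ((measurable_const.sub mA).mul mμ0))).aestronglyMeasurable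
    have ih1A : Integrable (fun ω => h1 ω * A ω) P :=
      (bh1.mul bA).integrable (mh1.mul mA).aestronglyMeasurable
    have ih0A : Integrable (fun ω => h0 ω * (1 - A ω)) P :=
      (bh0.mul b1A).integrable (mh0.mul (measurable_const.sub mA)).aestronglyMeasurable
    have ih1p : Integrable (fun ω => h1 ω * p ω) P :=
      (bh1.mul bp).integrable (mh1.mul mp).aestronglyMeasurable
    have ih0p : Integrable (fun ω => h0 ω * (1 - p ω)) P :=
      (bh0.mul b1p).integrable (mh0.mul (measurable_const.sub mp)).aestronglyMeasurable
    have iCEE : Integrable (fun ω => Iav ω * (Real.exp (-∑ i, φ ω i * βstar i) * μ1 ω - μ0 ω)) P :=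
      (bI.mul ((bexp.mul bμ1).sub bμ0)).integrable
        (mI.mul ((mexp.mul mμ1).sub mμ0)).aestronglyMeasurable
    -- step 1: pointwise decomposition of the estimating function
    have step1 : ∀ ω, U βstar ω j = γ ω * Y ω + α ω := by
      intro ω
      rw [hU βstar ω, hW ω]
      rcases hA01 ω with h | h
      · simp only [Pi.smul_apply, smul_eq_mul, hγ, hα, hq1, hq0, hB, h]
        norm_num [Real.exp_zero]
        ring
      · simp only [Pi.smul_apply, smul_eq_mul, hγ, hα, hq1, hq0, hB, h]
        norm_num
        ring
    -- step 3: pointwise identity after substituting the outcome regression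
    have step3 : ∀ ω, γ ω * (A ω * μ1 ω + (1 - A ω) * μ0 ω) + α ω
        = h1 ω * A ω + h0 ω * (1 - A ω) := by
      intro ω
      rcases hA01 ω with h | h <;>
        simp only [hγ, hα, hq1, hq0, hB, hh1, hh0, h] <;> ring
    -- step 6: a.e. identity collapsing p
    have step6 : ∀ᵐ ω ∂P, h1 ω * p ω + h0 ω * (1 - p ω)
        = k ω * (Iav ω * (Real.exp (-∑ i, φ ω i * βstar i) * μ1 ω - μ0 ω)) := by
      filter_upwards [hpb] with ω h
      have hp0 : p ω ≠ 0 := by linarith [h.1]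
      have hp1 : (1:ℝ) - p ω ≠ 0 := by
        have : p ω ≤ 1 - c := h.2
        intro hcon; rw [sub_eq_zero] at hcon; linarith
      simp only [hh1, hh0, hq1, hq0, hB, hk]
      field_simp
      ring
    -- chain of equalities
    calc ∫ ω, U βstar ω j ∂P
        = ∫ ω, (γ ω * Y ω + α ω) ∂P :=
          integral_congr_ae (Filter.Eventually.of_forall step1)
      _ = (∫ ω, γ ω * Y ω ∂P) + ∫ ω, α ω ∂P := integral_add iγY iα
      _ = (∫ ω, γ ω * (P[Y|G]) ω ∂P) + ∫ ω, α ω ∂P := by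
          rw [integral_mul_eq_integral_mul_condexp hGF Y sγ bγ hY]
      _ = (∫ ω, γ ω * (A ω * μ1 ω + (1 - A ω) * μ0 ω) ∂P) + ∫ ω, α ω ∂P := by
          congr 1
          refine integral_congr_ae ?_
          filter_upwards [hreg] with ω hω
          rw [hω]
      _ = ∫ ω, (γ ω * (A ω * μ1 ω + (1 - A ω) * μ0 ω) + α ω) ∂P :=
          (integral_add iγM iα).symm
      _ = ∫ ω, (h1 ω * A ω + h0 ω * (1 - A ω)) ∂P :=
          integral_congr_ae (Filter.Eventually.of_forall step3)
      _ = (∫ ω, h1 ω * A ω ∂P) + ∫ ω, h0 ω * (1 - A ω) ∂P := integral_add ih1A ih0A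
      _ = (∫ ω, h1 ω * (P[A|H]) ω ∂P) + ∫ ω, h0 ω * (P[fun ω => 1 - A ω|H]) ω ∂P := by
          rw [integral_mul_eq_integral_mul_condexp hH A sh1 bh1 iA,
            integral_mul_eq_integral_mul_condexp hH (fun ω => 1 - A ω) sh0 bh0 i1A]
      _ = (∫ ω, h1 ω * p ω ∂P) + ∫ ω, h0 ω * (1 - p ω) ∂P := by
          congr 1
          · refine integral_congr_ae ?_
            filter_upwards [hcond] with ω hω
            rw [hω]
          · refine integral_congr_ae ?_
            filter_upwards [hcondc] with ω hω
            rw [hω]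
      _ = ∫ ω, (h1 ω * p ω + h0 ω * (1 - p ω)) ∂P := (integral_add ih1p ih0p).symm
      _ = ∫ ω, k ω * (Iav ω * (Real.exp (-∑ i, φ ω i * βstar i) * μ1 ω - μ0 ω)) ∂P :=
          integral_congr_ae step6
      _ = ∫ ω, k ω *
            (P[fun ω => Iav ω * (Real.exp (-∑ i, φ ω i * βstar i) * μ1 ω - μ0 ω)|S1]) ω ∂P :=
          integral_mul_eq_integral_mul_condexp hS1F _ sk bk iCEE
      _ = 0 := by
          have hz : ∀ᵐ ω ∂P, k ω *
              (P[fun ω => Iav ω * (Real.exp (-∑ i, φ ω i * βstar i) * μ1 ω - μ0 ω)|S1]) ω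
              = 0 := by
            filter_upwards [hCEE] with ω hω
            rw [hω]
            simp
          rw [integral_congr_ae hz, integral_zero]
  -- assemble the vector statement
  by_cases hIntU : Integrable (U βstar) P
  · funext j
    calc (∫ ω, U βstar ω ∂P) j = ∫ ω, U βstar ω j ∂P := integral_apply_fin hIntU j
      _ = 0 := hcomp j
  · rw [integral_undef hIntU]
end

section
/- (β⋆ is the unique zero of the population estimating equation, identity link.) Suppose either e' = e⋆ a.s. or (m1, m0) = (μ1⋆, μ0⋆) a.s.; suppose p̃ and φ are measurable with respect to S₁ := σ(S ∪ σ(I)) ⊆ H; suppose the causal excursion effect model E[I·(μ1⋆ − μ0⋆) | S₁] = I·φᵀβ⋆ a.s. holds for a fixed β⋆ ∈ ℝ^d; and suppose the d×d matrix M := E[I·p̃·(1−p̃)·φ·φᵀ] is invertible. Then for every β ∈ ℝ^d, E[Ũ(β)] = M·(β⋆ − β), where Ũ(β) := I·W·(A − p̃)·[(R/e')·(Y − A·m1 − (1−A)·m0) + (A + p − 1)·(m1 − m0 − φᵀβ)]·φ; consequently β⋆ is the unique β ∈ ℝ^d satisfying E[Ũ(β)] = 0. -/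
open MeasureTheory

lemma abs_mul_le_of_le {a b x y : ℝ} (ha : |a| ≤ x) (hb : |b| ≤ y) : |a * b| ≤ x * y := by
  rw [abs_mul]
  exact mul_le_mul ha hb (abs_nonneg _) ((abs_nonneg a).trans ha)

lemma integrable_of_meas_bdd {Ω : Type*} {F : MeasurableSpace Ω} {P : Measure Ω}
    [IsProbabilityMeasure P] {f : Ω → ℝ} (hf : Measurable f) {C : ℝ}
    (hC : ∀ᵐ ω ∂P, |f ω| ≤ C) : Integrable f P :=
  Integrable.mono' (integrable_const C) hf.aestronglyMeasurable
    (by simpa [Real.norm_eq_abs] using hC)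

lemma int_mul_condexp {Ω : Type*} {F : MeasurableSpace Ω} {P : Measure Ω}
    [IsProbabilityMeasure P] {m : MeasurableSpace Ω} (hm : m ≤ F) {g f : Ω → ℝ}
    (hg : Measurable[m] g) {C : ℝ} (hgb : ∀ᵐ ω ∂P, |g ω| ≤ C) (hf : Integrable f P) :
    ∫ ω, g ω * f ω ∂P = ∫ ω, g ω * (P[f|m]) ω ∂P := by
  have hgF : AEStronglyMeasurable[F] g P :=
    ((hg.mono hm le_rfl).stronglyMeasurable).aestronglyMeasurable
  have hgb' : ∀ᵐ ω ∂P, ‖g ω‖ ≤ C := by simpa [Real.norm_eq_abs] using hgb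
  have h1 : Integrable (g * f) P := hf.bdd_mul hgF hgb'
  have h2 := condExp_mul_of_stronglyMeasurable_left hg.stronglyMeasurable h1 hf
  calc ∫ ω, g ω * f ω ∂P = ∫ ω, (g * f) ω ∂P := rfl
    _ = ∫ ω, (P[g * f|m]) ω ∂P := (integral_condExp hm).symm
    _ = ∫ ω, (g * P[f|m]) ω ∂P := integral_congr_ae h2
    _ = ∫ ω, g ω * (P[f|m]) ω ∂P := rfl

set_option maxHeartbeats 1600000 in
/-- β⋆ is the unique zero of the population estimating equation,
identity link: `E[Ũ(β)] = M·(β⋆ − β)` for every `β`, hence `β⋆` is the unique zero. -/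
theorem aipw_unique_zero_identity_link
    {Ω : Type*} (H : MeasurableSpace Ω) (G : MeasurableSpace Ω) (S S1 : MeasurableSpace Ω) {F : MeasurableSpace Ω} (P : Measure Ω) [IsProbabilityMeasure P]
    (hH : H ≤ F)
    (A p pt W : Ω → ℝ) (c : ℝ) (hc0 : 0 < c) (hc1 : c < 1/2)
    (hA : Measurable A) (hA01 : ∀ ω, A ω = 0 ∨ A ω = 1)
    (hp : Measurable[H] p) (hpt : Measurable[H] pt)
    (hpb : ∀ᵐ ω ∂P, c ≤ p ω ∧ p ω ≤ 1 - c)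
    (hptb : ∀ᵐ ω ∂P, c ≤ pt ω ∧ pt ω ≤ 1 - c)
    (hcond : P[A|H] =ᵐ[P] p)
    (hW : ∀ ω, W ω = if A ω = 1 then pt ω / p ω else (1 - pt ω) / (1 - p ω))
    (hG : G = H ⊔ MeasurableSpace.comap A inferInstance)
    (Y μ1 μ0 : Ω → ℝ) (hY : Integrable Y P)
    (hμ1 : Measurable[H] μ1) (hμ0 : Measurable[H] μ0)
    (hμ1b : ∃ C, ∀ ω, |μ1 ω| ≤ C) (hμ0b : ∃ C, ∀ ω, |μ0 ω| ≤ C)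
    (hreg : P[Y|G] =ᵐ[P] fun ω => A ω * μ1 ω + (1 - A ω) * μ0 ω)
    (R estar : Ω → ℝ) (hR : Measurable R) (hR01 : ∀ ω, R ω = 0 ∨ R ω = 1)
    (hestar : Measurable[G] estar) (hever : P[R|G] =ᵐ[P] estar)
    (hepos : ∀ᵐ ω ∂P, c ≤ estar ω)
    (hMAR : P[fun ω => R ω * Y ω|G] =ᵐ[P] fun ω => estar ω * (P[Y|G]) ω)
    {d : ℕ} (Iav : Ω → ℝ) (hIav : Measurable[H] Iav) (hIav01 : ∀ ω, Iav ω = 0 ∨ Iav ω = 1)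
    (φ : Ω → Fin d → ℝ) (hφ : Measurable[H] φ) (hφb : ∃ C, ∀ ω, ‖φ ω‖ ≤ C)
    (m1 m0 : Ω → ℝ) (hm1 : Measurable[H] m1) (hm0 : Measurable[H] m0)
    (hm1b : ∃ C, ∀ ω, |m1 ω| ≤ C) (hm0b : ∃ C, ∀ ω, |m0 ω| ≤ C)
    (e' : Ω → ℝ) (he' : Measurable[G] e') (he'b : ∀ᵐ ω ∂P, c ≤ e' ω ∧ e' ω ≤ 1)
    (U : (Fin d → ℝ) → Ω → Fin d → ℝ)
    (hU : ∀ β ω, U β ω =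
      (Iav ω * W ω * (A ω - pt ω) *
        ((R ω / e' ω) * (Y ω - A ω * m1 ω - (1 - A ω) * m0 ω)
          + (A ω + p ω - 1) * (m1 ω - m0 ω - ∑ j, φ ω j * β j))) • φ ω)
    (hS : S ≤ H)
    (hS1 : S1 = S ⊔ MeasurableSpace.comap Iav inferInstance)
    (hptS : Measurable[S1] pt) (hφS : Measurable[S1] φ)
    (βstar : Fin d → ℝ)
    (hCEE : P[fun ω => Iav ω * (μ1 ω - μ0 ω)|S1] =ᵐ[P]
      fun ω => Iav ω * ∑ j, φ ω j * βstar j)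
    (hDR : e' =ᵐ[P] estar ∨ (m1 =ᵐ[P] μ1 ∧ m0 =ᵐ[P] μ0))
    (M : Matrix (Fin d) (Fin d) ℝ)
    (hM : ∀ j k, M j k = ∫ ω, Iav ω * pt ω * (1 - pt ω) * φ ω j * φ ω k ∂P)
    (hMinv : IsUnit M) :
    (∀ β : Fin d → ℝ, (fun j => ∫ ω, U β ω j ∂P) = M.mulVec (βstar - β))
      ∧ ∀ β : Fin d → ℝ, (∀ j, ∫ ω, U β ω j ∂P = 0) ↔ β = βstar := by
  classical
  obtain ⟨Cφ, hCφ⟩ := hφb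
  obtain ⟨Cμ1, hCμ1⟩ := hμ1b
  obtain ⟨Cμ0, hCμ0⟩ := hμ0b
  obtain ⟨Cm1, hCm1⟩ := hm1b
  obtain ⟨Cm0, hCm0⟩ := hm0b
  -- σ-algebra relations
  have hHG : H ≤ G := hG ▸ le_sup_left
  have hGF : G ≤ F := by
    rw [hG]; exact sup_le hH (measurable_iff_comap_le.1 hA)
  have hAG : Measurable[G] A := by
    rw [measurable_iff_comap_le, hG]; exact le_sup_right
  have hS1H : S1 ≤ H := by
    rw [hS1]; exact sup_le hS (measurable_iff_comap_le.1 hIav)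
  have hAF : Measurable[F] A := hA
  have hS1F : S1 ≤ F := hS1H.trans hH
  -- measurability of W
  have hWeq : W = fun ω => if A ω = 1 then pt ω / p ω else (1 - pt ω) / (1 - p ω) :=
    funext hW
  have hWG : Measurable[G] W := by
    rw [hWeq]
    exact Measurable.ite (hAG (measurableSet_singleton 1))
      ((hpt.mono hHG le_rfl).div (hp.mono hHG le_rfl))
      (((measurable_const.sub (hpt.mono hHG le_rfl))).div
        (measurable_const.sub (hp.mono hHG le_rfl)))
  -- plain measurability of all atoms
  have mp : Measurable[F] p := hp.mono hH le_rfl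
  have mpt : Measurable[F] pt := hpt.mono hH le_rfl
  have mW : Measurable[F] W := hWG.mono hGF le_rfl
  have mR : Measurable[F] R := hR
  have mμ1 : Measurable[F] μ1 := hμ1.mono hH le_rfl
  have mμ0 : Measurable[F] μ0 := hμ0.mono hH le_rfl
  have mm1 : Measurable[F] m1 := hm1.mono hH le_rfl
  have mm0 : Measurable[F] m0 := hm0.mono hH le_rfl
  have mIav : Measurable[F] Iav := hIav.mono hH le_rfl
  have me' : Measurable[F] e' := he'.mono hGF le_rfl
  have mestar : Measurable[F] estar := hestar.mono hGF le_rfl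
  have mφ : Measurable[F] φ := hφ.mono hH le_rfl
  have mφj : ∀ k, Measurable[F] fun ω => φ ω k := fun k => (measurable_pi_apply k).comp mφ
  have mt : ∀ v : Fin d → ℝ, Measurable[F] fun ω => ∑ k, φ ω k * v k := fun v =>
    Finset.measurable_sum _ fun k _ => (mφj k).mul_const _
  -- pointwise bounds
  have hbIav : ∀ ω, |Iav ω| ≤ 1 := by
    intro ω; rcases hIav01 ω with h | h <;> simp [h]
  have hbA : ∀ ω, |A ω| ≤ 1 := by
    intro ω; rcases hA01 ω with h | h <;> simp [h]
  have hbR : ∀ ω, |R ω| ≤ 1 := by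
    intro ω; rcases hR01 ω with h | h <;> simp [h]
  have hb1A : ∀ ω, |1 - A ω| ≤ 1 := by
    intro ω; rcases hA01 ω with h | h <;> simp [h]
  have hφj : ∀ ω k, |φ ω k| ≤ |Cφ| := by
    intro ω k
    have h1 : |φ ω k| ≤ ‖φ ω‖ := by
      simpa [Real.norm_eq_abs] using norm_le_pi_norm (φ ω) k
    exact h1.trans ((hCφ ω).trans (le_abs_self _))
  have hbt : ∀ (v : Fin d → ℝ) ω, |∑ k, φ ω k * v k| ≤ |Cφ| * ∑ k, |v k| := by
    intro v ω
    calc |∑ k, φ ω k * v k| ≤ ∑ k, |φ ω k * v k| := Finset.abs_sum_le_sum_abs _ _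
      _ ≤ ∑ k, |Cφ| * |v k| := Finset.sum_le_sum fun k _ => by
          rw [abs_mul]; exact mul_le_mul_of_nonneg_right (hφj ω k) (abs_nonneg _)
      _ = |Cφ| * ∑ k, |v k| := (Finset.mul_sum _ _ _).symm
  have hbq : ∀ ω, |A ω * μ1 ω + (1 - A ω) * μ0 ω| ≤ |Cμ1| + |Cμ0| := by
    intro ω
    rcases hA01 ω with h | h <;> simp [h]
    · exact (hCμ0 ω).trans ((le_abs_self _).trans (by nlinarith [abs_nonneg Cμ1]))
    · exact (hCμ1 ω).trans ((le_abs_self _).trans (by nlinarith [abs_nonneg Cμ0]))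
  have hbqm : ∀ ω, |A ω * m1 ω + (1 - A ω) * m0 ω| ≤ |Cm1| + |Cm0| := by
    intro ω
    rcases hA01 ω with h | h <;> simp [h]
    · exact (hCm0 ω).trans ((le_abs_self _).trans (by nlinarith [abs_nonneg Cm1]))
    · exact (hCm1 ω).trans ((le_abs_self _).trans (by nlinarith [abs_nonneg Cm0]))
  -- a.e. bounds
  have hbApt : ∀ᵐ ω ∂P, |A ω - pt ω| ≤ 1 := by
    filter_upwards [hptb] with ω h
    rcases hA01 ω with h1 | h1 <;> rw [h1, abs_le] <;> constructor <;> linarith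
  have hbApp : ∀ᵐ ω ∂P, |A ω + p ω - 1| ≤ 1 := by
    filter_upwards [hpb] with ω h
    rcases hA01 ω with h1 | h1 <;> rw [h1, abs_le] <;> constructor <;> linarith
  have hbW : ∀ᵐ ω ∂P, |W ω| ≤ (1 - c) / c := by
    filter_upwards [hpb, hptb] with ω h1 h2
    rw [hW ω]
    rcases hA01 ω with h | h <;> simp only [h] <;> norm_num
    · rw [abs_of_nonneg (div_nonneg (by linarith) (by linarith))]
      exact div_le_div₀ (by linarith) (by linarith) hc0 (by linarith)
    · rw [abs_of_nonneg (div_nonneg (by linarith) (by linarith))]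
      exact div_le_div₀ (by linarith) (by linarith) hc0 h1.1
  have hbei : ∀ᵐ ω ∂P, |(e' ω)⁻¹| ≤ c⁻¹ := by
    filter_upwards [he'b] with ω h
    rw [abs_of_nonneg (inv_nonneg.2 (by linarith))]
    exact inv_anti₀ hc0 h.1
  have hbestar : ∀ᵐ ω ∂P, |estar ω| ≤ 1 := by
    have hRint : Integrable R P := integrable_of_meas_bdd mR (ae_of_all _ hbR)
    have hmono := condExp_mono (m := G) (μ := P) hRint (integrable_const 1)
      (ae_of_all _ fun ω => by rcases hR01 ω with h | h <;> simp [h])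
    rw [condExp_const hGF (1:ℝ)] at hmono
    filter_upwards [hever.symm, hmono, hepos] with ω h1 h2 h3
    rw [abs_le]; constructor
    · linarith
    · rw [h1]; exact h2
  have hbp1 : ∀ᵐ ω ∂P, |p ω| ≤ 1 := by
    filter_upwards [hpb] with ω h; rw [abs_le]; constructor <;> linarith
  have hbpt1 : ∀ᵐ ω ∂P, |pt ω| ≤ 1 := by
    filter_upwards [hptb] with ω h; rw [abs_le]; constructor <;> linarith
  have hb1pt : ∀ᵐ ω ∂P, |1 - pt ω| ≤ 1 := by
    filter_upwards [hptb] with ω h; rw [abs_le]; constructor <;> linarith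
  have hb1p : ∀ᵐ ω ∂P, |1 - p ω| ≤ 1 := by
    filter_upwards [hpb] with ω h; rw [abs_le]; constructor <;> linarith
  have hbptp : ∀ᵐ ω ∂P, |pt ω / p ω| ≤ (1 - c) / c := by
    filter_upwards [hpb, hptb] with ω h1 h2
    rw [abs_of_nonneg (div_nonneg (by linarith) (by linarith))]
    exact div_le_div₀ (by linarith) (by linarith) hc0 h1.1
  have hbptp0 : ∀ᵐ ω ∂P, |(1 - pt ω) / (1 - p ω)| ≤ (1 - c) / c := by
    filter_upwards [hpb, hptb] with ω h1 h2
    rw [abs_of_nonneg (div_nonneg (by linarith) (by linarith))]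
    exact div_le_div₀ (by linarith) (by linarith) hc0 (by linarith)
  -- basic integrable functions
  have intA : Integrable A P := integrable_of_meas_bdd hAF (ae_of_all _ hbA)
  have intR : Integrable R P := integrable_of_meas_bdd mR (ae_of_all _ hbR)
  have int1A : Integrable (fun ω => 1 - A ω) P := (integrable_const 1).sub intA
  have intRY : Integrable (fun ω => R ω * Y ω) P :=
    hY.bdd_mul mR.aestronglyMeasurable
      (ae_of_all _ fun ω => by simpa [Real.norm_eq_abs] using hbR ω)
  have hcond1A : P[fun ω => 1 - A ω|H] =ᵐ[P] fun ω => 1 - p ω := by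
    have h := condExp_sub (m := H) (μ := P) (integrable_const (1:ℝ)) intA
    have h2 : P[(fun _ : Ω => (1:ℝ))|H] = fun _ => 1 := condExp_const hH 1
    have h' : P[fun ω => 1 - A ω|H] =ᵐ[P] (fun _ : Ω => (1:ℝ)) - P[A|H] := by
      refine h.trans ?_
      rw [h2]
    filter_upwards [h', hcond] with ω hω h2ω
    rw [hω, Pi.sub_apply, h2ω]
  -- main componentwise computation
  have main : ∀ (β : Fin d → ℝ) (j : Fin d),
      ∫ ω, U β ω j ∂P = ∑ k, M j k * (βstar k - β k) := by
    intro β j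
    -- component measurable functions
    have φjH : ∀ k, Measurable[H] fun ω => φ ω k := fun k => (measurable_pi_apply k).comp hφ
    have tH : ∀ v : Fin d → ℝ, Measurable[H] fun ω => ∑ k, φ ω k * v k := fun v =>
      Finset.measurable_sum _ fun k _ => (φjH k).mul_const _
    -- pointwise decomposition of the integrand
    have step0 : ∀ ω, U β ω j =
        Iav ω * W ω * (A ω - pt ω) * φ ω j * (e' ω)⁻¹ * (R ω * Y ω) +
        (-(Iav ω * W ω * (A ω - pt ω) * φ ω j * (e' ω)⁻¹ *
            (A ω * m1 ω + (1 - A ω) * m0 ω)) * R ω +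
          Iav ω * W ω * (A ω - pt ω) * (A ω + p ω - 1) *
            (m1 ω - m0 ω - ∑ k, φ ω k * β k) * φ ω j) := by
      intro ω
      have h := congrFun (hU β ω) j
      rw [h, Pi.smul_apply, smul_eq_mul, div_eq_mul_inv]
      ring
    -- measurability of the pieces (w.r.t. F)
    have mg1 : Measurable[F] fun ω => Iav ω * W ω * (A ω - pt ω) * φ ω j * (e' ω)⁻¹ :=
      (((mIav.mul mW).mul (hAF.sub mpt)).mul (mφj j)).mul me'.inv
    have mqm : Measurable[F] fun ω => A ω * m1 ω + (1 - A ω) * m0 ω :=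
      (hAF.mul mm1).add ((measurable_const.sub hAF).mul mm0)
    have mq : Measurable[F] fun ω => A ω * μ1 ω + (1 - A ω) * μ0 ω :=
      (hAF.mul mμ1).add ((measurable_const.sub hAF).mul mμ0)
    have mg2 : Measurable[F] fun ω => -(Iav ω * W ω * (A ω - pt ω) * φ ω j * (e' ω)⁻¹ *
        (A ω * m1 ω + (1 - A ω) * m0 ω)) := (mg1.mul mqm).neg
    have mG2 : Measurable[F] fun ω => Iav ω * W ω * (A ω - pt ω) * (A ω + p ω - 1) *
        (m1 ω - m0 ω - ∑ k, φ ω k * β k) * φ ω j :=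
      ((((mIav.mul mW).mul (hAF.sub mpt)).mul ((hAF.add mp).sub measurable_const)).mul
        ((mm1.sub mm0).sub (mt β))).mul (mφj j)
    have mBR1 : Measurable[F] fun ω =>
        (μ1 ω - m1 ω) + p ω * (m1 ω - m0 ω - ∑ k, φ ω k * β k) :=
      (mμ1.sub mm1).add (mp.mul ((mm1.sub mm0).sub (mt β)))
    have mBR0 : Measurable[F] fun ω =>
        (μ0 ω - m0 ω) + (p ω - 1) * (m1 ω - m0 ω - ∑ k, φ ω k * β k) :=
      (mμ0.sub mm0).add ((mp.sub measurable_const).mul ((mm1.sub mm0).sub (mt β)))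
    have mh1 : Measurable[F] fun ω => Iav ω * (pt ω / p ω) * (1 - pt ω) * φ ω j *
        ((μ1 ω - m1 ω) + p ω * (m1 ω - m0 ω - ∑ k, φ ω k * β k)) :=
      (((mIav.mul (mpt.div mp)).mul (measurable_const.sub mpt)).mul (mφj j)).mul mBR1
    have mh0 : Measurable[F] fun ω => Iav ω * ((1 - pt ω) / (1 - p ω)) * (-pt ω) * φ ω j *
        ((μ0 ω - m0 ω) + (p ω - 1) * (m1 ω - m0 ω - ∑ k, φ ω k * β k)) :=
      (((mIav.mul ((measurable_const.sub mpt).div (measurable_const.sub mp))).mul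
        mpt.neg).mul (mφj j)).mul mBR0
    have mg3 : Measurable[F] fun ω => pt ω * (1 - pt ω) * φ ω j :=
      (mpt.mul (measurable_const.sub mpt)).mul (mφj j)
    -- G- H- S1-measurability
    have hg1G : Measurable[G] fun ω => Iav ω * W ω * (A ω - pt ω) * φ ω j * (e' ω)⁻¹ :=
      ((((hIav.mono hHG le_rfl).mul hWG).mul (hAG.sub (hpt.mono hHG le_rfl))).mul
        (((measurable_pi_apply j).comp (hφ.mono hHG le_rfl)))).mul he'.inv
    have hqmG : Measurable[G] fun ω => A ω * m1 ω + (1 - A ω) * m0 ω :=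
      (hAG.mul (hm1.mono hHG le_rfl)).add
        ((measurable_const.sub hAG).mul (hm0.mono hHG le_rfl))
    have hg2G : Measurable[G] fun ω => -(Iav ω * W ω * (A ω - pt ω) * φ ω j * (e' ω)⁻¹ *
        (A ω * m1 ω + (1 - A ω) * m0 ω)) := (hg1G.mul hqmG).neg
    have h1H : Measurable[H] fun ω => Iav ω * (pt ω / p ω) * (1 - pt ω) * φ ω j *
        ((μ1 ω - m1 ω) + p ω * (m1 ω - m0 ω - ∑ k, φ ω k * β k)) :=
      (((hIav.mul (hpt.div hp)).mul (measurable_const.sub hpt)).mul (φjH j)).mul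
        ((hμ1.sub hm1).add (hp.mul ((hm1.sub hm0).sub (tH β))))
    have h0H : Measurable[H] fun ω => Iav ω * ((1 - pt ω) / (1 - p ω)) * (-pt ω) * φ ω j *
        ((μ0 ω - m0 ω) + (p ω - 1) * (m1 ω - m0 ω - ∑ k, φ ω k * β k)) :=
      (((hIav.mul ((measurable_const.sub hpt).div (measurable_const.sub hp))).mul
        hpt.neg).mul (φjH j)).mul
        ((hμ0.sub hm0).add ((hp.sub measurable_const).mul ((hm1.sub hm0).sub (tH β))))
    have g3S : Measurable[S1] fun ω => pt ω * (1 - pt ω) * φ ω j :=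
      (hptS.mul (measurable_const.sub hptS)).mul ((measurable_pi_apply j).comp hφS)
    -- bounds
    have hbbr : ∀ ω, |m1 ω - m0 ω - ∑ k, φ ω k * β k| ≤
        |Cm1| + |Cm0| + |Cφ| * ∑ k, |β k| := by
      intro ω
      have h1 := abs_le.1 ((hCm1 ω).trans (le_abs_self _))
      have h2 := abs_le.1 ((hCm0 ω).trans (le_abs_self _))
      have h3 := abs_le.1 (hbt β ω)
      rw [abs_le]; constructor <;> linarith
    have bg1 : ∀ᵐ ω ∂P, |Iav ω * W ω * (A ω - pt ω) * φ ω j * (e' ω)⁻¹| ≤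
        1 * ((1 - c) / c) * 1 * |Cφ| * c⁻¹ := by
      filter_upwards [hbW, hbApt, hbei] with ω h1 h2 h3
      exact abs_mul_le_of_le (abs_mul_le_of_le (abs_mul_le_of_le
        (abs_mul_le_of_le (hbIav ω) h1) h2) (hφj ω j)) h3
    have bg2 : ∀ᵐ ω ∂P, |-(Iav ω * W ω * (A ω - pt ω) * φ ω j * (e' ω)⁻¹ *
        (A ω * m1 ω + (1 - A ω) * m0 ω))| ≤
        1 * ((1 - c) / c) * 1 * |Cφ| * c⁻¹ * (|Cm1| + |Cm0|) := by
      filter_upwards [bg1] with ω h1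
      rw [abs_neg]
      exact abs_mul_le_of_le h1 (hbqm ω)
    have bG2 : ∀ᵐ ω ∂P, |Iav ω * W ω * (A ω - pt ω) * (A ω + p ω - 1) *
        (m1 ω - m0 ω - ∑ k, φ ω k * β k) * φ ω j| ≤
        1 * ((1 - c) / c) * 1 * 1 * (|Cm1| + |Cm0| + |Cφ| * ∑ k, |β k|) * |Cφ| := by
      filter_upwards [hbW, hbApt, hbApp] with ω h1 h2 h3
      exact abs_mul_le_of_le (abs_mul_le_of_le (abs_mul_le_of_le (abs_mul_le_of_le
        (abs_mul_le_of_le (hbIav ω) h1) h2) h3) (hbbr ω)) (hφj ω j)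
    have bI2 : ∀ᵐ ω ∂P, |Iav ω * W ω * (A ω - pt ω) * φ ω j * (e' ω)⁻¹ *
        (estar ω * (A ω * μ1 ω + (1 - A ω) * μ0 ω))| ≤
        1 * ((1 - c) / c) * 1 * |Cφ| * c⁻¹ * (1 * (|Cμ1| + |Cμ0|)) := by
      filter_upwards [bg1, hbestar] with ω h1 h2
      exact abs_mul_le_of_le h1 (abs_mul_le_of_le h2 (hbq ω))
    have bI3 : ∀ᵐ ω ∂P, |-(Iav ω * W ω * (A ω - pt ω) * φ ω j * (e' ω)⁻¹ *
        (A ω * m1 ω + (1 - A ω) * m0 ω)) * estar ω| ≤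
        1 * ((1 - c) / c) * 1 * |Cφ| * c⁻¹ * (|Cm1| + |Cm0|) * 1 := by
      filter_upwards [bg2, hbestar] with ω h1 h2
      exact abs_mul_le_of_le h1 h2
    have bBR1 : ∀ᵐ ω ∂P, |(μ1 ω - m1 ω) + p ω * (m1 ω - m0 ω - ∑ k, φ ω k * β k)| ≤
        |Cμ1| + |Cm1| + 1 * (|Cm1| + |Cm0| + |Cφ| * ∑ k, |β k|) := by
      filter_upwards [hbp1] with ω h1
      have h2 := abs_le.1 (abs_mul_le_of_le h1 (hbbr ω))
      have h3 := abs_le.1 ((hCμ1 ω).trans (le_abs_self _))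
      have h4 := abs_le.1 ((hCm1 ω).trans (le_abs_self _))
      rw [abs_le]; constructor <;> linarith
    have bBR0 : ∀ᵐ ω ∂P, |(μ0 ω - m0 ω) + (p ω - 1) * (m1 ω - m0 ω - ∑ k, φ ω k * β k)| ≤
        |Cμ0| + |Cm0| + 1 * (|Cm1| + |Cm0| + |Cφ| * ∑ k, |β k|) := by
      filter_upwards [hpb] with ω h1
      have hp1' : |p ω - 1| ≤ 1 := by rw [abs_le]; constructor <;> linarith
      have h2 := abs_le.1 (abs_mul_le_of_le hp1' (hbbr ω))
      have h3 := abs_le.1 ((hCμ0 ω).trans (le_abs_self _))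
      have h4 := abs_le.1 ((hCm0 ω).trans (le_abs_self _))
      rw [abs_le]; constructor <;> linarith
    have bh1 : ∀ᵐ ω ∂P, |Iav ω * (pt ω / p ω) * (1 - pt ω) * φ ω j *
        ((μ1 ω - m1 ω) + p ω * (m1 ω - m0 ω - ∑ k, φ ω k * β k))| ≤
        1 * ((1 - c) / c) * 1 * |Cφ| *
          (|Cμ1| + |Cm1| + 1 * (|Cm1| + |Cm0| + |Cφ| * ∑ k, |β k|)) := by
      filter_upwards [hbptp, hb1pt, bBR1] with ω h1 h2 h3
      exact abs_mul_le_of_le (abs_mul_le_of_le (abs_mul_le_of_le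
        (abs_mul_le_of_le (hbIav ω) h1) h2) (hφj ω j)) h3
    have bh0 : ∀ᵐ ω ∂P, |Iav ω * ((1 - pt ω) / (1 - p ω)) * (-pt ω) * φ ω j *
        ((μ0 ω - m0 ω) + (p ω - 1) * (m1 ω - m0 ω - ∑ k, φ ω k * β k))| ≤
        1 * ((1 - c) / c) * 1 * |Cφ| *
          (|Cμ0| + |Cm0| + 1 * (|Cm1| + |Cm0| + |Cφ| * ∑ k, |β k|)) := by
      filter_upwards [hbptp0, hbpt1, bBR0] with ω h1 h2 h3
      have h2' : |-pt ω| ≤ 1 := by rwa [abs_neg]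
      exact abs_mul_le_of_le (abs_mul_le_of_le (abs_mul_le_of_le
        (abs_mul_le_of_le (hbIav ω) h1) h2') (hφj ω j)) h3
    have bg3 : ∀ᵐ ω ∂P, |pt ω * (1 - pt ω) * φ ω j| ≤ 1 * 1 * |Cφ| := by
      filter_upwards [hbpt1, hb1pt] with ω h1 h2
      exact abs_mul_le_of_le (abs_mul_le_of_le h1 h2) (hφj ω j)
    have hbd : ∀ ω, |μ1 ω - μ0 ω| ≤ |Cμ1| + |Cμ0| := by
      intro ω
      have h3 := abs_le.1 ((hCμ1 ω).trans (le_abs_self _))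
      have h4 := abs_le.1 ((hCμ0 ω).trans (le_abs_self _))
      rw [abs_le]; constructor <;> linarith
    have bIμ : ∀ ω, |Iav ω * (μ1 ω - μ0 ω)| ≤ 1 * (|Cμ1| + |Cμ0|) := fun ω =>
      abs_mul_le_of_le (hbIav ω) (hbd ω)
    -- integrable pieces
    have intf1 : Integrable (fun ω =>
        Iav ω * W ω * (A ω - pt ω) * φ ω j * (e' ω)⁻¹ * (R ω * Y ω)) P :=
      intRY.bdd_mul mg1.aestronglyMeasurable
        (by filter_upwards [bg1] with ω h; rwa [Real.norm_eq_abs])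
    have intf2 : Integrable (fun ω => -(Iav ω * W ω * (A ω - pt ω) * φ ω j * (e' ω)⁻¹ *
        (A ω * m1 ω + (1 - A ω) * m0 ω)) * R ω) P :=
      integrable_of_meas_bdd (mg2.mul mR) (by
        filter_upwards [bg2] with ω h1
        exact abs_mul_le_of_le h1 (hbR ω))
    have intf3 : Integrable (fun ω => Iav ω * W ω * (A ω - pt ω) * (A ω + p ω - 1) *
        (m1 ω - m0 ω - ∑ k, φ ω k * β k) * φ ω j) P :=
      integrable_of_meas_bdd mG2 bG2
    have intI2 : Integrable (fun ω => Iav ω * W ω * (A ω - pt ω) * φ ω j * (e' ω)⁻¹ *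
        (estar ω * (A ω * μ1 ω + (1 - A ω) * μ0 ω))) P :=
      integrable_of_meas_bdd (mg1.mul (mestar.mul mq)) bI2
    have intI3 : Integrable (fun ω => -(Iav ω * W ω * (A ω - pt ω) * φ ω j * (e' ω)⁻¹ *
        (A ω * m1 ω + (1 - A ω) * m0 ω)) * estar ω) P :=
      integrable_of_meas_bdd (mg2.mul mestar) bI3
    have inth1A : Integrable (fun ω => Iav ω * (pt ω / p ω) * (1 - pt ω) * φ ω j *
        ((μ1 ω - m1 ω) + p ω * (m1 ω - m0 ω - ∑ k, φ ω k * β k)) * A ω) P :=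
      integrable_of_meas_bdd (mh1.mul hAF) (by
        filter_upwards [bh1] with ω h1; exact abs_mul_le_of_le h1 (hbA ω))
    have inth0A : Integrable (fun ω => Iav ω * ((1 - pt ω) / (1 - p ω)) * (-pt ω) * φ ω j *
        ((μ0 ω - m0 ω) + (p ω - 1) * (m1 ω - m0 ω - ∑ k, φ ω k * β k)) * (1 - A ω)) P :=
      integrable_of_meas_bdd (mh0.mul (measurable_const.sub hAF)) (by
        filter_upwards [bh0] with ω h1; exact abs_mul_le_of_le h1 (hb1A ω))
    have inth1p : Integrable (fun ω => Iav ω * (pt ω / p ω) * (1 - pt ω) * φ ω j *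
        ((μ1 ω - m1 ω) + p ω * (m1 ω - m0 ω - ∑ k, φ ω k * β k)) * p ω) P :=
      integrable_of_meas_bdd (mh1.mul mp) (by
        filter_upwards [bh1, hbp1] with ω h1 h2; exact abs_mul_le_of_le h1 h2)
    have inth0p : Integrable (fun ω => Iav ω * ((1 - pt ω) / (1 - p ω)) * (-pt ω) * φ ω j *
        ((μ0 ω - m0 ω) + (p ω - 1) * (m1 ω - m0 ω - ∑ k, φ ω k * β k)) * (1 - p ω)) P :=
      integrable_of_meas_bdd (mh0.mul (measurable_const.sub mp)) (by
        filter_upwards [bh0, hb1p] with ω h1 h2; exact abs_mul_le_of_le h1 h2)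
    have intIμ : Integrable (fun ω => Iav ω * (μ1 ω - μ0 ω)) P :=
      integrable_of_meas_bdd (mIav.mul (mμ1.sub mμ0)) (ae_of_all _ bIμ)
    have intKa : Integrable (fun ω =>
        pt ω * (1 - pt ω) * φ ω j * (Iav ω * (μ1 ω - μ0 ω))) P :=
      integrable_of_meas_bdd (mg3.mul (mIav.mul (mμ1.sub mμ0))) (by
        filter_upwards [bg3] with ω h1; exact abs_mul_le_of_le h1 (bIμ ω))
    have intKb : ∀ v : Fin d → ℝ, Integrable (fun ω =>
        pt ω * (1 - pt ω) * φ ω j * (Iav ω * ∑ k, φ ω k * v k)) P := fun v =>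
      integrable_of_meas_bdd (mg3.mul (mIav.mul (mt v))) (by
        filter_upwards [bg3] with ω h1
        exact abs_mul_le_of_le h1 (abs_mul_le_of_le (hbIav ω) (hbt v ω)))
    have intsum : ∀ k : Fin d, Integrable (fun ω =>
        Iav ω * pt ω * (1 - pt ω) * φ ω j * φ ω k * (βstar k - β k)) P := fun k =>
      integrable_of_meas_bdd
        (((((mIav.mul mpt).mul (measurable_const.sub mpt)).mul (mφj j)).mul
          (mφj k)).mul_const _)
        (by
          filter_upwards [hbpt1, hb1pt] with ω h1 h2
          exact abs_mul_le_of_le (abs_mul_le_of_le (abs_mul_le_of_le (abs_mul_le_of_le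
            (abs_mul_le_of_le (hbIav ω) h1) h2) (hφj ω j)) (hφj ω k)) (le_refl _))
    -- step 1: condition on G
    have E2 : ∫ ω, Iav ω * W ω * (A ω - pt ω) * φ ω j * (e' ω)⁻¹ * (R ω * Y ω) ∂P =
        ∫ ω, Iav ω * W ω * (A ω - pt ω) * φ ω j * (e' ω)⁻¹ *
          (estar ω * (A ω * μ1 ω + (1 - A ω) * μ0 ω)) ∂P := by
      rw [int_mul_condexp hGF hg1G bg1 intRY]
      refine integral_congr_ae ?_
      filter_upwards [hMAR, hreg] with ω h1 h2
      rw [h1, h2]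
    have E3 : ∫ ω, -(Iav ω * W ω * (A ω - pt ω) * φ ω j * (e' ω)⁻¹ *
          (A ω * m1 ω + (1 - A ω) * m0 ω)) * R ω ∂P =
        ∫ ω, -(Iav ω * W ω * (A ω - pt ω) * φ ω j * (e' ω)⁻¹ *
          (A ω * m1 ω + (1 - A ω) * m0 ω)) * estar ω ∂P := by
      rw [int_mul_condexp hGF hg2G bg2 intR]
      refine integral_congr_ae ?_
      filter_upwards [hever] with ω h1
      rw [h1]
    -- step 2: double robustness a.e. identity
    have hae4 : (fun ω => Iav ω * W ω * (A ω - pt ω) * φ ω j * (e' ω)⁻¹ *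
          (estar ω * (A ω * μ1 ω + (1 - A ω) * μ0 ω)) +
        (-(Iav ω * W ω * (A ω - pt ω) * φ ω j * (e' ω)⁻¹ *
            (A ω * m1 ω + (1 - A ω) * m0 ω)) * estar ω +
          Iav ω * W ω * (A ω - pt ω) * (A ω + p ω - 1) *
            (m1 ω - m0 ω - ∑ k, φ ω k * β k) * φ ω j)) =ᵐ[P]
        (fun ω => Iav ω * (pt ω / p ω) * (1 - pt ω) * φ ω j *
          ((μ1 ω - m1 ω) + p ω * (m1 ω - m0 ω - ∑ k, φ ω k * β k)) * A ω +
          Iav ω * ((1 - pt ω) / (1 - p ω)) * (-pt ω) * φ ω j *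
          ((μ0 ω - m0 ω) + (p ω - 1) * (m1 ω - m0 ω - ∑ k, φ ω k * β k)) * (1 - A ω)) := by
      rcases hDR with hee | ⟨he1, he0⟩
      · filter_upwards [hee, he'b, hpb] with ω h1 h2 h3
        have he0' : e' ω ≠ 0 := by
          have := h2.1; intro h; rw [h] at this; linarith
        have hp0 : p ω ≠ 0 := by
          have := h3.1; intro h; rw [h] at this; linarith
        have hp1 : (1 : ℝ) - p ω ≠ 0 := by
          have := h3.2
          intro h
          have : p ω = 1 := by linarith
          linarith
        have key : (e' ω)⁻¹ * e' ω = 1 := inv_mul_cancel₀ he0'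
        rw [hW ω, ← h1]
        rcases hA01 ω with hA' | hA' <;> rw [hA']
        · rw [if_neg (by norm_num)]
          linear_combination (Iav ω * ((1 - pt ω) / (1 - p ω)) * (-pt ω) * φ ω j *
            (μ0 ω - m0 ω)) * key
        · rw [if_pos rfl]
          linear_combination (Iav ω * (pt ω / p ω) * (1 - pt ω) * φ ω j *
            (μ1 ω - m1 ω)) * key
      · filter_upwards [he1, he0] with ω h1 h2
        rw [hW ω, h1, h2]
        rcases hA01 ω with hA' | hA' <;> rw [hA']
        · rw [if_neg (by norm_num)]
          ring
        · rw [if_pos rfl]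
          ring
    -- step 3: condition on H
    have E6 : ∫ ω, Iav ω * (pt ω / p ω) * (1 - pt ω) * φ ω j *
          ((μ1 ω - m1 ω) + p ω * (m1 ω - m0 ω - ∑ k, φ ω k * β k)) * A ω ∂P =
        ∫ ω, Iav ω * (pt ω / p ω) * (1 - pt ω) * φ ω j *
          ((μ1 ω - m1 ω) + p ω * (m1 ω - m0 ω - ∑ k, φ ω k * β k)) * p ω ∂P := by
      rw [int_mul_condexp hH h1H bh1 intA]
      refine integral_congr_ae ?_
      filter_upwards [hcond] with ω h1
      rw [h1]
    have E7 : ∫ ω, Iav ω * ((1 - pt ω) / (1 - p ω)) * (-pt ω) * φ ω j *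
          ((μ0 ω - m0 ω) + (p ω - 1) * (m1 ω - m0 ω - ∑ k, φ ω k * β k)) * (1 - A ω) ∂P =
        ∫ ω, Iav ω * ((1 - pt ω) / (1 - p ω)) * (-pt ω) * φ ω j *
          ((μ0 ω - m0 ω) + (p ω - 1) * (m1 ω - m0 ω - ∑ k, φ ω k * β k)) * (1 - p ω) ∂P := by
      rw [int_mul_condexp hH h0H bh0 int1A]
      refine integral_congr_ae ?_
      filter_upwards [hcond1A] with ω h1
      rw [h1]
    -- step 4: algebraic simplification after integrating out A
    have hae8 : (fun ω => Iav ω * (pt ω / p ω) * (1 - pt ω) * φ ω j *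
          ((μ1 ω - m1 ω) + p ω * (m1 ω - m0 ω - ∑ k, φ ω k * β k)) * p ω +
          Iav ω * ((1 - pt ω) / (1 - p ω)) * (-pt ω) * φ ω j *
          ((μ0 ω - m0 ω) + (p ω - 1) * (m1 ω - m0 ω - ∑ k, φ ω k * β k)) * (1 - p ω)) =ᵐ[P]
        (fun ω => pt ω * (1 - pt ω) * φ ω j * (Iav ω * (μ1 ω - μ0 ω)) -
          pt ω * (1 - pt ω) * φ ω j * (Iav ω * ∑ k, φ ω k * β k)) := by
      filter_upwards [hpb] with ω h3
      have hp0 : p ω ≠ 0 := by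
        have := h3.1; intro h; rw [h] at this; linarith
      have hp1 : (1 : ℝ) - p ω ≠ 0 := by
        have := h3.2
        intro h
        have : p ω = 1 := by linarith
        linarith
      have key1 : pt ω / p ω * p ω = pt ω := div_mul_cancel₀ _ hp0
      have key2 : (1 - pt ω) / (1 - p ω) * (1 - p ω) = 1 - pt ω := div_mul_cancel₀ _ hp1
      linear_combination (Iav ω * (1 - pt ω) * φ ω j *
          ((μ1 ω - m1 ω) + p ω * (m1 ω - m0 ω - ∑ k, φ ω k * β k))) * key1 +
        (Iav ω * (-pt ω) * φ ω j *
          ((μ0 ω - m0 ω) + (p ω - 1) * (m1 ω - m0 ω - ∑ k, φ ω k * β k))) * key2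
    -- step 5: condition on S1
    have E10 : ∫ ω, pt ω * (1 - pt ω) * φ ω j * (Iav ω * (μ1 ω - μ0 ω)) ∂P =
        ∫ ω, pt ω * (1 - pt ω) * φ ω j * (Iav ω * ∑ k, φ ω k * βstar k) ∂P := by
      rw [int_mul_condexp hS1F g3S bg3 intIμ]
      refine integral_congr_ae ?_
      filter_upwards [hCEE] with ω h1
      rw [h1]
    -- step 6: expand the sum
    have hsum : ∀ ω, pt ω * (1 - pt ω) * φ ω j * (Iav ω * ∑ k, φ ω k * βstar k) -
        pt ω * (1 - pt ω) * φ ω j * (Iav ω * ∑ k, φ ω k * β k) =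
        ∑ k, Iav ω * pt ω * (1 - pt ω) * φ ω j * φ ω k * (βstar k - β k) := by
      intro ω
      simp only [Finset.mul_sum]
      rw [← Finset.sum_sub_distrib]
      exact Finset.sum_congr rfl fun k _ => by ring
    -- assemble
    calc ∫ ω, U β ω j ∂P
        = ∫ ω, (Iav ω * W ω * (A ω - pt ω) * φ ω j * (e' ω)⁻¹ * (R ω * Y ω) +
            (-(Iav ω * W ω * (A ω - pt ω) * φ ω j * (e' ω)⁻¹ *
                (A ω * m1 ω + (1 - A ω) * m0 ω)) * R ω +
              Iav ω * W ω * (A ω - pt ω) * (A ω + p ω - 1) *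
                (m1 ω - m0 ω - ∑ k, φ ω k * β k) * φ ω j)) ∂P :=
          integral_congr_ae (ae_of_all _ step0)
      _ = (∫ ω, Iav ω * W ω * (A ω - pt ω) * φ ω j * (e' ω)⁻¹ * (R ω * Y ω) ∂P) +
          ((∫ ω, -(Iav ω * W ω * (A ω - pt ω) * φ ω j * (e' ω)⁻¹ *
              (A ω * m1 ω + (1 - A ω) * m0 ω)) * R ω ∂P) +
            ∫ ω, Iav ω * W ω * (A ω - pt ω) * (A ω + p ω - 1) *
              (m1 ω - m0 ω - ∑ k, φ ω k * β k) * φ ω j ∂P) := by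
          rw [show (∫ ω, (Iav ω * W ω * (A ω - pt ω) * φ ω j * (e' ω)⁻¹ * (R ω * Y ω) +
            (-(Iav ω * W ω * (A ω - pt ω) * φ ω j * (e' ω)⁻¹ *
                (A ω * m1 ω + (1 - A ω) * m0 ω)) * R ω +
              Iav ω * W ω * (A ω - pt ω) * (A ω + p ω - 1) *
                (m1 ω - m0 ω - ∑ k, φ ω k * β k) * φ ω j)) ∂P) =
            (∫ ω, Iav ω * W ω * (A ω - pt ω) * φ ω j * (e' ω)⁻¹ * (R ω * Y ω) ∂P) +
            ∫ ω, (-(Iav ω * W ω * (A ω - pt ω) * φ ω j * (e' ω)⁻¹ *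
                (A ω * m1 ω + (1 - A ω) * m0 ω)) * R ω +
              Iav ω * W ω * (A ω - pt ω) * (A ω + p ω - 1) *
                (m1 ω - m0 ω - ∑ k, φ ω k * β k) * φ ω j) ∂P
            from integral_add intf1 (intf2.add intf3)]
          exact congrArg _ (integral_add intf2 intf3)
      _ = (∫ ω, Iav ω * W ω * (A ω - pt ω) * φ ω j * (e' ω)⁻¹ *
            (estar ω * (A ω * μ1 ω + (1 - A ω) * μ0 ω)) ∂P) +
          ((∫ ω, -(Iav ω * W ω * (A ω - pt ω) * φ ω j * (e' ω)⁻¹ *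
              (A ω * m1 ω + (1 - A ω) * m0 ω)) * estar ω ∂P) +
            ∫ ω, Iav ω * W ω * (A ω - pt ω) * (A ω + p ω - 1) *
              (m1 ω - m0 ω - ∑ k, φ ω k * β k) * φ ω j ∂P) := by
          rw [E2, E3]
      _ = ∫ ω, (Iav ω * W ω * (A ω - pt ω) * φ ω j * (e' ω)⁻¹ *
            (estar ω * (A ω * μ1 ω + (1 - A ω) * μ0 ω)) +
          (-(Iav ω * W ω * (A ω - pt ω) * φ ω j * (e' ω)⁻¹ *
              (A ω * m1 ω + (1 - A ω) * m0 ω)) * estar ω +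
            Iav ω * W ω * (A ω - pt ω) * (A ω + p ω - 1) *
              (m1 ω - m0 ω - ∑ k, φ ω k * β k) * φ ω j)) ∂P := by
          rw [show (∫ ω, (Iav ω * W ω * (A ω - pt ω) * φ ω j * (e' ω)⁻¹ *
            (estar ω * (A ω * μ1 ω + (1 - A ω) * μ0 ω)) +
          (-(Iav ω * W ω * (A ω - pt ω) * φ ω j * (e' ω)⁻¹ *
              (A ω * m1 ω + (1 - A ω) * m0 ω)) * estar ω +
            Iav ω * W ω * (A ω - pt ω) * (A ω + p ω - 1) *
              (m1 ω - m0 ω - ∑ k, φ ω k * β k) * φ ω j)) ∂P) =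
            (∫ ω, Iav ω * W ω * (A ω - pt ω) * φ ω j * (e' ω)⁻¹ *
            (estar ω * (A ω * μ1 ω + (1 - A ω) * μ0 ω)) ∂P) +
            ∫ ω, (-(Iav ω * W ω * (A ω - pt ω) * φ ω j * (e' ω)⁻¹ *
              (A ω * m1 ω + (1 - A ω) * m0 ω)) * estar ω +
            Iav ω * W ω * (A ω - pt ω) * (A ω + p ω - 1) *
              (m1 ω - m0 ω - ∑ k, φ ω k * β k) * φ ω j) ∂P
            from integral_add intI2 (intI3.add intf3)]
          exact congrArg _ (integral_add intI3 intf3).symm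
      _ = ∫ ω, (Iav ω * (pt ω / p ω) * (1 - pt ω) * φ ω j *
            ((μ1 ω - m1 ω) + p ω * (m1 ω - m0 ω - ∑ k, φ ω k * β k)) * A ω +
            Iav ω * ((1 - pt ω) / (1 - p ω)) * (-pt ω) * φ ω j *
            ((μ0 ω - m0 ω) + (p ω - 1) * (m1 ω - m0 ω - ∑ k, φ ω k * β k)) * (1 - A ω)) ∂P :=
          integral_congr_ae hae4
      _ = (∫ ω, Iav ω * (pt ω / p ω) * (1 - pt ω) * φ ω j *
            ((μ1 ω - m1 ω) + p ω * (m1 ω - m0 ω - ∑ k, φ ω k * β k)) * A ω ∂P) +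
          ∫ ω, Iav ω * ((1 - pt ω) / (1 - p ω)) * (-pt ω) * φ ω j *
            ((μ0 ω - m0 ω) + (p ω - 1) * (m1 ω - m0 ω - ∑ k, φ ω k * β k)) * (1 - A ω) ∂P :=
          integral_add inth1A inth0A
      _ = (∫ ω, Iav ω * (pt ω / p ω) * (1 - pt ω) * φ ω j *
            ((μ1 ω - m1 ω) + p ω * (m1 ω - m0 ω - ∑ k, φ ω k * β k)) * p ω ∂P) +
          ∫ ω, Iav ω * ((1 - pt ω) / (1 - p ω)) * (-pt ω) * φ ω j *
            ((μ0 ω - m0 ω) + (p ω - 1) * (m1 ω - m0 ω - ∑ k, φ ω k * β k)) * (1 - p ω) ∂P := by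
          rw [E6, E7]
      _ = ∫ ω, (Iav ω * (pt ω / p ω) * (1 - pt ω) * φ ω j *
            ((μ1 ω - m1 ω) + p ω * (m1 ω - m0 ω - ∑ k, φ ω k * β k)) * p ω +
            Iav ω * ((1 - pt ω) / (1 - p ω)) * (-pt ω) * φ ω j *
            ((μ0 ω - m0 ω) + (p ω - 1) * (m1 ω - m0 ω - ∑ k, φ ω k * β k)) * (1 - p ω)) ∂P :=
          (integral_add inth1p inth0p).symm
      _ = ∫ ω, (pt ω * (1 - pt ω) * φ ω j * (Iav ω * (μ1 ω - μ0 ω)) -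
            pt ω * (1 - pt ω) * φ ω j * (Iav ω * ∑ k, φ ω k * β k)) ∂P :=
          integral_congr_ae hae8
      _ = (∫ ω, pt ω * (1 - pt ω) * φ ω j * (Iav ω * (μ1 ω - μ0 ω)) ∂P) -
          ∫ ω, pt ω * (1 - pt ω) * φ ω j * (Iav ω * ∑ k, φ ω k * β k) ∂P :=
          integral_sub intKa (intKb β)
      _ = (∫ ω, pt ω * (1 - pt ω) * φ ω j * (Iav ω * ∑ k, φ ω k * βstar k) ∂P) -
          ∫ ω, pt ω * (1 - pt ω) * φ ω j * (Iav ω * ∑ k, φ ω k * β k) ∂P := by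
          rw [E10]
      _ = ∫ ω, (pt ω * (1 - pt ω) * φ ω j * (Iav ω * ∑ k, φ ω k * βstar k) -
            pt ω * (1 - pt ω) * φ ω j * (Iav ω * ∑ k, φ ω k * β k)) ∂P :=
          (integral_sub (intKb βstar) (intKb β)).symm
      _ = ∫ ω, (∑ k, Iav ω * pt ω * (1 - pt ω) * φ ω j * φ ω k * (βstar k - β k)) ∂P :=
          integral_congr_ae (ae_of_all _ hsum)
      _ = ∑ k, ∫ ω, Iav ω * pt ω * (1 - pt ω) * φ ω j * φ ω k * (βstar k - β k) ∂P :=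
          integral_finset_sum _ fun k _ => intsum k
      _ = ∑ k, M j k * (βstar k - β k) :=
          Finset.sum_congr rfl fun k _ => by rw [integral_mul_const, hM j k]
  constructor
  · intro β
    funext j
    rw [main β j]
    simp [Matrix.mulVec, dotProduct, Pi.sub_apply]
  · intro β
    constructor
    · intro h0
      have hv : M.mulVec (βstar - β) = 0 := by
        have h1 : (fun j => ∫ ω, U β ω j ∂P) = M.mulVec (βstar - β) := by
          funext j
          rw [main β j]
          simp [Matrix.mulVec, dotProduct, Pi.sub_apply]
        rw [← h1]
        funext j; exact h0 j
      have hinj : Function.Injective M.mulVec := Matrix.mulVec_injective_iff_isUnit.2 hMinv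
      have : βstar - β = 0 := hinj (by rw [hv, Matrix.mulVec_zero])
      have := sub_eq_zero.1 this
      exact this.symm
    · rintro rfl j
      rw [main β j]
      simp
end
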